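/- arXiv:2202.11398 — 6 statements merged into one kernel-verified Lean document; each statement's English description precedes it below -/
import Mathlib

section
/- Let S be a subset of Dic(A,y) with 1 ∉ S and S⁻¹ = S, and write S = S₁ ∪ xS₂ with S₁, S₂ ⊆ A. Then the Cayley graph Cay(Dic(A,y), S) is integral if and only if both of the following hold: (1) S₁ ∈ B(A); (2) for every one-dimensional representation π : A → ℂ* with A² ⊄ ker(π), there exists α ∈ ℤ such that π(S₂)·π(S₂⁻¹) = α². -/
open scoped Classical Pointwise

/-- The generalized dicyclic group `Dic(A, y)` where `y : A` satisfies `y * y = 1`.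
The element `⟨t, a⟩` represents `x^t * a`, where `x` is the extra generator with
`x ^ 2 = y` and `x * a * x⁻¹ = a⁻¹` for all `a ∈ A`. -/
@[ext]
structure Dic (A : Type*) [CommGroup A] (y : A) (hy : y * y = 1) where
  t : Bool
  a : A

namespace Dic

variable {A : Type*} [CommGroup A] {y : A} {hy : y * y = 1}

instance : Mul (Dic A y hy) :=
  ⟨fun g h => ⟨xor g.t h.t, (if h.t then g.a⁻¹ else g.a) * h.a * (if g.t && h.t then y else 1)⟩⟩

instance : One (Dic A y hy) := ⟨⟨false, 1⟩⟩

instance : Inv (Dic A y hy) := ⟨fun g => ⟨g.t, if g.t then y * g.a else g.a⁻¹⟩⟩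

@[simp] lemma mul_t (g h : Dic A y hy) : (g * h).t = xor g.t h.t := rfl
@[simp] lemma mul_a (g h : Dic A y hy) :
    (g * h).a = (if h.t then g.a⁻¹ else g.a) * h.a * (if g.t && h.t then y else 1) := rfl
@[simp] lemma one_t : (1 : Dic A y hy).t = false := rfl
@[simp] lemma one_a : (1 : Dic A y hy).a = 1 := rfl
@[simp] lemma inv_t (g : Dic A y hy) : g⁻¹.t = g.t := rfl
@[simp] lemma inv_a (g : Dic A y hy) : g⁻¹.a = if g.t then y * g.a else g.a⁻¹ := rfl

instance : Group (Dic A y hy) where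
  mul_assoc g₁ g₂ g₃ := by
    have hyi : y⁻¹ = y := inv_eq_of_mul_eq_one_right hy
    ext
    · cases g₁.t <;> cases g₂.t <;> cases g₃.t <;> simp
    · cases h₁ : g₁.t <;> cases h₂ : g₂.t <;> cases h₃ : g₃.t <;>
        simp [h₁, h₂, h₃, hyi, mul_inv_rev, mul_comm, mul_assoc, mul_left_comm]
  one_mul g := by ext <;> simp
  mul_one g := by ext <;> simp
  inv_mul_cancel g := by
    ext
    · simp
    · cases h : g.t <;> simp [h, mul_inv_rev, mul_comm, mul_assoc, mul_left_comm]

/-- The canonical embedding of `A` into `Dic A y hy`. -/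
def ofA (a : A) : Dic A y hy := ⟨false, a⟩

/-- The extra generator `x` of `Dic A y hy`, satisfying `x ^ 2 = y`. -/
def x (A : Type*) [CommGroup A] (y : A) (hy : y * y = 1) : Dic A y hy := ⟨true, 1⟩

instance [Fintype A] : Fintype (Dic A y hy) :=
  Fintype.ofEquiv (Bool × A)
    { toFun := fun p => ⟨p.1, p.2⟩
      invFun := fun g => (g.t, g.a)
      left_inv := fun _ => rfl
      right_inv := fun _ => rfl }

end Dic

/-- The Cayley graph of a group `G` with respect to a connection set `S`.  When `1 ∉ S` and
`S⁻¹ = S`, two vertices `g h` are adjacent if and only if `g⁻¹ * h ∈ S`. -/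
def cayley {G : Type*} [Group G] (S : Set G) : SimpleGraph G :=
  SimpleGraph.fromRel fun g h => g⁻¹ * h ∈ S

/-- A graph on a finite vertex set is integral if all eigenvalues of its adjacency matrix
are integers. -/
noncomputable def IsIntegralGraph {V : Type*} [Fintype V] (Γ : SimpleGraph V) : Prop :=
  ∀ μ ∈ spectrum ℝ (Γ.adjMatrix ℝ), ∃ k : ℤ, (k : ℝ) = μ

/-- The distance matrix of a graph on a finite vertex set. -/
noncomputable def distMatrix {V : Type*} [Fintype V] (Γ : SimpleGraph V) : Matrix V V ℝ :=
  Matrix.of fun v w => (Γ.dist v w : ℝ)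

/-- A (connected) graph on a finite vertex set is distance integral if all eigenvalues of its
distance matrix are integers. -/
noncomputable def IsDistanceIntegral {V : Type*} [Fintype V] (Γ : SimpleGraph V) : Prop :=
  ∀ μ ∈ spectrum ℝ (distMatrix Γ), ∃ k : ℤ, (k : ℝ) = μ

/-- The Boolean algebra `B(A)` of a group `A`: the collection of subsets of `A` generated by
the subgroups of `A` under finite intersections, unions, and complements. -/
inductive InBoolAlg (A : Type*) [Group A] : Set A → Prop
  | subgroup (H : Subgroup A) : InBoolAlg A (H : Set A)
  | compl {s : Set A} : InBoolAlg A s → InBoolAlg A sᶜ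
  | union {s t : Set A} : InBoolAlg A s → InBoolAlg A t → InBoolAlg A (s ∪ t)
  | inter {s t : Set A} : InBoolAlg A s → InBoolAlg A t → InBoolAlg A (s ∩ t)

/-- `mulPow S n = S^(n)`, the set of products of `n` elements of `S` (`S^(0) = {1}`). -/
def mulPow {G : Type*} [Monoid G] (S : Set G) (n : ℕ) : Set G :=
  {g | ∃ l : List G, l.length = n ∧ (∀ u ∈ l, u ∈ S) ∧ l.prod = g}

/-- `wordLen S g = ℓ_S(g)`: `0` if `g = 1`, and otherwise the least `n ≥ 1` such that `g` is a
product of `n` elements of `S`. -/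
noncomputable def wordLen {G : Type*} [Group G] (S : Set G) (g : G) : ℕ :=
  if g = 1 then 0 else sInf {n : ℕ | g ∈ mulPow S n}

/-- The distance power `Γ^D`: two distinct vertices are adjacent iff their distance in `Γ`
belongs to `D`. -/
def distPower {V : Type*} (Γ : SimpleGraph V) (D : Finset ℕ) : SimpleGraph V where
  Adj v w := v ≠ w ∧ Γ.dist v w ∈ D
  symm := ⟨fun v w h => ⟨h.1.symm, by rw [SimpleGraph.dist_comm]; exact h.2⟩⟩
  loopless := ⟨fun v h => h.1 rfl⟩

/-- A multiset `(A, f)` lies in `C(A)` iff `f` is constant on each atom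
`[a] = {b : ⟨b⟩ = ⟨a⟩}`. -/
def InCA {A : Type*} [Group A] (f : A → ℕ) : Prop :=
  ∀ a b : A, Subgroup.zpowers a = Subgroup.zpowers b → f a = f b

/-- The two-dimensional representation `R_π` of `Dic A y hy` induced by a one-dimensional
representation `π` of `A`:  `R_π(x) = [[0, π y], [1, 0]]` and `R_π(a) = diag(π a, π a⁻¹)`. -/
noncomputable def Rpi {A : Type*} [CommGroup A] {y : A} {hy : y * y = 1}
    (π : A →* ℂ) (g : Dic A y hy) : Matrix (Fin 2) (Fin 2) ℂ :=
  (if g.t then !![0, π y; 1, 0] else 1) * !![π g.a, 0; 0, π g.a⁻¹]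

/-- The complex-conjugate of a one-dimensional representation. -/
def conjHom {A : Type*} [CommGroup A] (π : A →* ℂ) : A →* ℂ :=
  (starRingEnd ℂ).toMonoidHom.comp π

/-!
For a character `π` of `A`, the functions `⟨false, a⟩ ↦ c₀ π(a)`, `⟨true, a⟩ ↦ c₁ π(a⁻¹)` form a
subspace on which the adjacency matrix of `Cay(Dic(A,y), S)` acts as the Hermitian matrix
`[[π(S₁), π(S₂⁻¹)], [π(S₂), π(S₁)]]`, and these subspaces span all functions on `Dic(A,y)`.
Hence the eigenvalues are exactly the numbers `π(S₁) ± |π(S₂)|`. They are all integers iff every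
`π(S₁)` is an integer (half their sum is a rational algebraic integer) and every
`π(S₂)π(S₂⁻¹) = |π(S₂)|²` is a perfect square. By Bridges–Mena, the first condition means
`S₁ ∈ B(A)`: integrality of all `π(S₁)` makes them invariant under `ζ ↦ ζᵏ` on roots of unity,
so `S₁` is a union of the atoms `{b | ⟨b⟩ = ⟨s⟩}`. When `A² ⊆ ker π`, `π` is `±1`-valued and
`π(S₂)π(S₂⁻¹) = π(S₂)²` is automatically a square.
-/

open Finset
open scoped Matrix

section Characters

variable {A : Type*} [CommGroup A] [Fintype A]

/-- The character sum `π(T)`. -/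
noncomputable def charSum (π : A →* ℂ) (T : Set A) : ℂ := ∑ a ∈ T.toFinset, π a

lemma isIntegral_char (π : A →* ℂ) (a : A) : IsIntegral ℤ (π a) :=
  .of_pow Fintype.card_pos <| by rw [← map_pow, pow_card_eq_one, map_one]; exact isIntegral_one

lemma isIntegral_charSum (π : A →* ℂ) (T : Set A) : IsIntegral ℤ (charSum π T) :=
  IsIntegral.sum _ fun a _ => isIntegral_char π a

lemma char_inv_eq_conj (π : A →* ℂ) (a : A) : π a⁻¹ = starRingEnd ℂ (π a) := by
  have hnorm : ‖π a‖ = 1 := Complex.norm_eq_one_of_pow_eq_one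
    (by rw [← map_pow, pow_card_eq_one, map_one]) Fintype.card_ne_zero
  rw [← Complex.inv_eq_conj hnorm]
  exact eq_inv_of_mul_eq_one_right (by rw [← map_mul, mul_inv_cancel, map_one])

lemma span_chars_eq_top : Submodule.span ℂ (Set.range fun π : A →* ℂ => ⇑π) = ⊤ := by
  have hcard : Nat.card (A →* ℂ) = Fintype.card A := by
    rw [Nat.card_congr MonoidHom.toHomUnitsMulEquiv.toEquiv,
      CommGroup.card_monoidHom_of_hasEnoughRootsOfUnity, Nat.card_eq_fintype_card]
  have : Finite (A →* ℂ) := Nat.finite_of_card_ne_zero (hcard ▸ Fintype.card_ne_zero)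
  have := Fintype.ofFinite (A →* ℂ)
  refine (linearIndependent_monoidHom A ℂ).span_eq_top_of_card_eq_finrank' ?_
  rw [Module.finrank_fintype_fun_eq_card, ← hcard, Nat.card_eq_fintype_card]

lemma eq_of_charSum_eq {T T' : Set A} (h : ∀ π : A →* ℂ, charSum π T = charSum π T') :
    T = T' := by
  let L : Set A → (A → ℂ) →ₗ[ℂ] ℂ := fun T => ∑ a ∈ T.toFinset, LinearMap.proj a
  have hL : L T = L T' :=
    LinearMap.ext_on_range span_chars_eq_top fun π => by simpa [L, charSum] using h π
  ext a
  have := congrArg (· (Pi.single a 1)) hL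
  simp only [L, LinearMap.coe_sum, Finset.sum_apply, LinearMap.coe_proj, Function.eval,
    Pi.single_apply, Finset.sum_ite_eq', Set.mem_toFinset] at this
  split_ifs at this <;> simp_all

lemma charSum_inv_eq_sum (π : A →* ℂ) (T : Set A) :
    charSum π T⁻¹ = ∑ a ∈ T.toFinset, π a⁻¹ := by
  rw [charSum, ← Set.image_inv_eq_inv, Set.toFinset_image, sum_image fun _ _ _ _ => inv_inj.mp]

lemma charSum_inv (π : A →* ℂ) (T : Set A) : charSum π T⁻¹ = starRingEnd ℂ (charSum π T) := by
  rw [charSum_inv_eq_sum, charSum, map_sum]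
  exact sum_congr rfl fun a _ => char_inv_eq_conj π a

lemma charSum_smul (π : A →* ℂ) (c : A) (T : Set A) :
    charSum π (c • T) = π c * charSum π T := by
  rw [charSum, ← Set.image_smul, Set.toFinset_image,
    sum_image fun _ _ _ _ => smul_left_cancel c, charSum, mul_sum]
  simp

lemma charSum_eq_sum_indicator (π : A →* ℂ) (T : Set A) :
    charSum π T = ∑ a, (T.indicator 1 a : ℤ) * π a := by
  simp [charSum, Set.indicator_apply, Finset.sum_ite, Set.filter_mem_univ_eq_toFinset]

lemma exists_int_charSum_subgroup (π : A →* ℂ) (H : Subgroup A) :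
    ∃ z : ℤ, charSum π H = z := by
  have hsum : charSum π H = ∑ h : H, (π.comp H.subtype) h :=
    Finset.sum_subtype _ (fun a => by simp) π
  rw [hsum, sum_hom_units]
  split_ifs
  exacts [⟨Fintype.card H, by simp⟩, ⟨0, by simp⟩]

lemma exists_int_charSum_mul_charSum_inv_of_sq_eq_one {π : A →* ℂ} (hπ : ∀ a, π (a * a) = 1)
    (T : Set A) : ∃ β : ℤ, charSum π T * charSum π T⁻¹ = β ^ 2 := by
  have hinv : ∀ a, π a⁻¹ = π a := fun a => by
    rw [show a⁻¹ = a * (a * a)⁻¹ by group, map_mul, map_inv, hπ, inv_one, mul_one]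
  have hsign : ∀ a, ∃ k : ℤ, π a = k := fun a => by
    rcases (mul_self_eq_one_iff (a := π a)).mp (by rw [← map_mul, hπ]) with h | h
    exacts [⟨1, by simp [h]⟩, ⟨-1, by simp [h]⟩]
  choose k hk using hsign
  refine ⟨∑ a ∈ T.toFinset, k a, ?_⟩
  rw [charSum_inv_eq_sum, charSum, sum_congr rfl fun a _ => hinv a, ← sq]
  push_cast
  rw [sum_congr rfl fun a _ => hk a]

end Characters

open Polynomial in
lemma IsPrimitiveRoot.aeval_pow_of_coprime {ζ : ℂ} {n k : ℕ} (hζ : IsPrimitiveRoot ζ n)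
    (hk : k.Coprime n) {f : ℚ[X]} {c : ℚ} (hf : aeval ζ f = c) : aeval (ζ ^ k) f = c := by
  rcases n.eq_zero_or_pos with rfl | hn
  · rw [(Nat.coprime_zero_right k).mp hk, pow_one, hf]
  have hmin : minpoly ℚ ζ = minpoly ℚ (ζ ^ k) := by
    rw [← cyclotomic_eq_minpoly_rat hζ hn, ← cyclotomic_eq_minpoly_rat (hζ.pow_of_coprime k hk) hn]
  obtain ⟨g, hg⟩ := minpoly.dvd ℚ ζ (p := f - C c) (by simp [hf])
  have := congrArg (aeval (ζ ^ k)) hg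
  rwa [hmin, map_mul, minpoly.aeval, zero_mul, map_sub, aeval_C, sub_eq_zero,
    eq_ratCast] at this

lemma exists_int_eq_of_isIntegral_of_eq_ratCast {x : ℂ} {r : ℚ} (hx : IsIntegral ℤ x)
    (hr : x = r) : ∃ z : ℤ, x = z := by
  subst hr
  obtain ⟨z, hz⟩ := IsIntegrallyClosed.isIntegral_iff.mp
    ((isIntegral_algebraMap_iff (algebraMap ℚ ℂ).injective).mp hx)
  exact ⟨z, by rw [← hz]; simp⟩

lemma exists_int_eq_of_sub_sq_eq_sq {μ : ℝ} {z β : ℤ} (h : ((μ : ℂ) - z) ^ 2 = (β : ℂ) ^ 2) :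
    ∃ k : ℤ, (k : ℝ) = μ := by
  have h' : (μ - z) ^ 2 = (β : ℝ) ^ 2 := by exact_mod_cast h
  rcases sq_eq_sq_iff_eq_or_eq_neg.mp h' with h'' | h''
  exacts [⟨z + β, by push_cast; linarith⟩, ⟨z - β, by push_cast; linarith⟩]

lemma exists_coprime_pow_eq_of_zpowers_eq {G : Type*} [Group G] [Fintype G] {s b : G}
    (h : Subgroup.zpowers b = Subgroup.zpowers s) :
    ∃ k : ℕ, k.Coprime (Fintype.card G) ∧ s ^ k = b := by
  obtain ⟨j, rfl⟩ : ∃ j : ℕ, s ^ j = b :=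
    mem_powers_iff_mem_zpowers.mpr (h ▸ Subgroup.mem_zpowers b)
  have hj : (orderOf s).Coprime j := by
    have hord := orderOf_pow (n := j) s
    rw [← Nat.card_zpowers, h, Nat.card_zpowers] at hord
    exact (Nat.div_eq_self.mp hord.symm).resolve_left (orderOf_pos s).ne'
  -- lift the unit `j` modulo `orderOf s` to a unit modulo `|G|`
  have hdvd : orderOf s ∣ Fintype.card G := orderOf_dvd_card
  obtain ⟨u, hu⟩ := ZMod.unitsMap_surjective hdvd (ZMod.unitOfCoprime j hj.symm)
  refine ⟨(u : ZMod (Fintype.card G)).val, ZMod.val_coe_unit_coprime u, ?_⟩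
  rw [pow_eq_pow_iff_modEq, ← ZMod.natCast_eq_natCast_iff, ZMod.natCast_val,
    ← ZMod.unitsMap_val hdvd, hu, ZMod.coe_unitOfCoprime]

def subgroupIndicators (A : Type*) [Group A] : Submonoid (A → ℤ) where
  carrier := Set.range fun H : Subgroup A => (H : Set A).indicator 1
  one_mem' := ⟨⊤, by simp⟩
  mul_mem' := by
    rintro _ _ ⟨H, rfl⟩ ⟨K, rfl⟩
    exact ⟨H ⊓ K, by simp [Set.inter_indicator_one]⟩

namespace InBoolAlg

variable {A : Type*} [Group A]

lemma univ : InBoolAlg A Set.univ := by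
  simpa using subgroup (⊤ : Subgroup A)

lemma empty : InBoolAlg A ∅ := by
  simpa using univ.compl (A := A)

lemma biUnion {ι : Type*} (t : Finset ι) {f : ι → Set A} (hf : ∀ i ∈ t, InBoolAlg A (f i)) :
    InBoolAlg A (⋃ i ∈ t, f i) := by
  classical
  induction t using Finset.induction with
  | empty => simpa using empty
  | insert i t _ ih =>
    rw [Finset.set_biUnion_insert]
    exact (hf i (mem_insert_self i t)).union (ih fun j hj => hf j (mem_insert_of_mem hj))

lemma biInter {ι : Type*} (t : Finset ι) {f : ι → Set A} (hf : ∀ i ∈ t, InBoolAlg A (f i)) :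
    InBoolAlg A (⋂ i ∈ t, f i) := by
  classical
  induction t using Finset.induction with
  | empty => simpa using univ
  | insert i t _ ih =>
    rw [Finset.set_biInter_insert]
    exact (hf i (mem_insert_self i t)).inter (ih fun j hj => hf j (mem_insert_of_mem hj))

lemma setOf_zpowers_eq [Fintype A] (s : A) :
    InBoolAlg A {b | Subgroup.zpowers b = Subgroup.zpowers s} := by
  have hatom : {b | Subgroup.zpowers b = Subgroup.zpowers s} =
      (Subgroup.zpowers s : Set A) ∩
        ⋂ b ∈ Finset.univ.filter (Subgroup.zpowers · < Subgroup.zpowers s),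
          (Subgroup.zpowers b : Set A)ᶜ := by
    ext c
    simp only [Set.mem_ofPred_eq, Set.mem_inter_iff, Set.mem_iInter, mem_filter, mem_univ,
      true_and, Set.mem_compl_iff, SetLike.mem_coe, ← Subgroup.zpowers_le]
    refine ⟨fun hc => ⟨hc.le, fun b hb hcb => (hcb.trans_lt hb).ne hc⟩,
      fun ⟨hle, hmin⟩ => hle.eq_or_lt.resolve_right fun hlt => hmin c hlt le_rfl⟩
  rw [hatom]
  exact (subgroup _).inter (biInter _ fun b _ => (subgroup _).compl)

lemma indicator_mem_closure {T : Set A} (hT : InBoolAlg A T) :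
    T.indicator 1 ∈ Subring.closure (subgroupIndicators A : Set (A → ℤ)) := by
  induction hT with
  | subgroup H => exact Subring.subset_closure ⟨H, rfl⟩
  | compl _ ih => rw [Set.indicator_compl]; exact sub_mem (one_mem _) ih
  | @union s t _ _ ihs iht =>
    rw [eq_sub_of_add_eq (Set.indicator_union_add_inter (M := ℤ) 1 s t), Set.inter_indicator_one]
    exact sub_mem (add_mem ihs iht) (mul_mem ihs iht)
  | inter _ _ ihs iht => rw [Set.inter_indicator_one]; exact mul_mem ihs iht

lemma exists_int_charSum_eq {A : Type*} [CommGroup A] [Fintype A] {T : Set A}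
    (hT : InBoolAlg A T) (π : A →* ℂ) : ∃ z : ℤ, charSum π T = z := by
  let φ : (A → ℤ) →+ ℂ :=
    { toFun f := ∑ a, (f a : ℂ) * π a
      map_zero' := by simp
      map_add' f g := by simp [add_mul, sum_add_distrib] }
  -- subgroup indicators are closed under `*`, so the subring they generate is their additive span
  have hclosure : ∀ f ∈ Subring.closure (subgroupIndicators A : Set (A → ℤ)),
      f ∈ (Int.castAddHom ℂ).range.comap φ := by
    intro f hf
    rw [Subring.mem_closure_iff, Submonoid.closure_eq] at hf
    refine AddSubgroup.closure_le _ |>.mpr ?_ hf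
    rintro _ ⟨H, rfl⟩
    obtain ⟨z, hz⟩ := exists_int_charSum_subgroup π H
    exact ⟨z, by simp [φ, ← charSum_eq_sum_indicator, hz]⟩
  obtain ⟨z, hz⟩ := hclosure _ hT.indicator_mem_closure
  exact ⟨z, by simpa [φ, ← charSum_eq_sum_indicator] using hz.symm⟩

end InBoolAlg

section BridgesMena

variable {A : Type*} [CommGroup A] [Fintype A]

lemma image_pow_eq_of_forall_charSum_int {T : Set A}
    (hT : ∀ π : A →* ℂ, ∃ z : ℤ, charSum π T = z) {k : ℕ} (hk : k.Coprime (Fintype.card A)) :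
    (· ^ k) '' T = T := by
  refine eq_of_charSum_eq fun π => ?_
  have hinj : Function.Injective (· ^ k : A → A) :=
    (Nat.Coprime.pow_left_bijective (by rwa [Nat.card_eq_fintype_card, Nat.coprime_comm])).1
  have hζ := Complex.isPrimitiveRoot_exp _ (Fintype.card_ne_zero (α := A))
  choose e he using fun a : A => hζ.eq_pow_of_pow_eq_one (ξ := π a)
    (by rw [← map_pow, pow_card_eq_one, map_one])
  obtain ⟨z, hz⟩ := hT π
  -- `π(T) = ∑ ζ^(e a)` is an integer, so it is fixed by the Galois conjugation `ζ ↦ ζᵏ`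
  have hgal := hζ.aeval_pow_of_coprime hk (f := ∑ a ∈ T.toFinset, Polynomial.X ^ e a) (c := z)
    (by simpa [charSum, (he _).2] using hz)
  rw [hz, charSum, Set.toFinset_image, sum_image fun a _ b _ h => hinj h]
  simp only [map_sum, map_pow, Polynomial.aeval_X, Rat.cast_intCast] at hgal
  rw [← hgal]
  refine sum_congr rfl fun a _ => ?_
  rw [map_pow, ← (he a).2, ← pow_mul, ← pow_mul, Nat.mul_comm]

theorem inBoolAlg_iff_forall_charSum_int {T : Set A} :
    InBoolAlg A T ↔ ∀ π : A →* ℂ, ∃ z : ℤ, charSum π T = z := by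
  refine ⟨fun hT => hT.exists_int_charSum_eq, fun hT => ?_⟩
  have hT' : T = ⋃ s ∈ T.toFinset, {b | Subgroup.zpowers b = Subgroup.zpowers s} := by
    ext b
    simp only [Set.mem_iUnion, Set.mem_ofPred_eq, Set.mem_toFinset, exists_prop]
    refine ⟨fun hb => ⟨b, hb, rfl⟩, fun ⟨s, hs, hbs⟩ => ?_⟩
    obtain ⟨k, hk, rfl⟩ := exists_coprime_pow_eq_of_zpowers_eq hbs
    exact image_pow_eq_of_forall_charSum_int hT hk ▸ Set.mem_image_of_mem _ hs
  rw [hT']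
  exact InBoolAlg.biUnion _ fun s _ => InBoolAlg.setOf_zpowers_eq s

end BridgesMena

lemma Matrix.mem_spectrum_iff_exists_mulVec_eq_smul {n : Type*} [Fintype n] [DecidableEq n]
    (M : Matrix n n ℝ) (μ : ℝ) :
    μ ∈ spectrum ℝ M ↔ ∃ v : n → ℂ, v ≠ 0 ∧ M.map (↑) *ᵥ v = (μ : ℂ) • v := by
  have hroot : μ ∈ spectrum ℝ M ↔ (μ : ℂ) ∈ spectrum ℂ (M.map (algebraMap ℝ ℂ)) := by
    rw [mem_spectrum_iff_isRoot_charpoly, mem_spectrum_iff_isRoot_charpoly, charpoly_map]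
    exact (Polynomial.isRoot_map_iff (algebraMap ℝ ℂ).injective).symm
  rw [hroot, ← spectrum_toLin', ← Module.End.hasEigenvalue_iff_mem_spectrum]
  refine ⟨fun h => ?_, fun ⟨v, hv0, hv⟩ => Module.End.hasEigenvalue_of_hasEigenvector ⟨?_, hv0⟩⟩
  · obtain ⟨v, hv, hv0⟩ := h.exists_hasEigenvector
    exact ⟨v, hv0, by simpa using Module.End.mem_eigenspace_iff.mp hv⟩
  · exact Module.End.mem_eigenspace_iff.mpr (by simpa using hv)

lemma SimpleGraph.map_adjMatrix_ofReal {V : Type*} [Fintype V] (Γ : SimpleGraph V)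
    [DecidableRel Γ.Adj] : (Γ.adjMatrix ℝ).map (↑) = Γ.adjMatrix ℂ := by
  ext v w
  by_cases h : Γ.Adj v w <;> simp [h]

section Cayley

variable {G : Type*} [Group G] {S : Set G}

lemma cayley_adj (h1 : 1 ∉ S) (hinv : S⁻¹ = S) {g h : G} :
    (cayley S).Adj g h ↔ g⁻¹ * h ∈ S := by
  rw [cayley, SimpleGraph.fromRel_adj]
  refine ⟨fun ⟨_, hgh⟩ => hgh.elim id fun hhg => ?_, fun hgh => ⟨?_, .inl hgh⟩⟩
  · rwa [← hinv, Set.mem_inv, mul_inv_rev, inv_inv]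
  · rintro rfl
    exact h1 (by rwa [inv_mul_cancel] at hgh)

lemma cayley_adjMatrix_mulVec [Fintype G] (h1 : 1 ∉ S) (hinv : S⁻¹ = S) (v : G → ℂ) (g : G) :
    ((cayley S).adjMatrix ℂ *ᵥ v) g = ∑ s ∈ S.toFinset, v (g * s) := by
  have hnbr : (cayley S).neighborFinset g = S.toFinset.image (g * ·) := by
    ext h
    simp [cayley_adj h1 hinv]
  rw [SimpleGraph.adjMatrix_mulVec_apply, hnbr, sum_image fun _ _ _ _ => mul_left_cancel]

end Cayley

namespace Dic

variable {A : Type*} [CommGroup A] {y : A} {hy : y * y = 1}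

/-- The connection set `S₁ ∪ x S₂`. -/
def connSet (S₁ S₂ : Set A) : Set (Dic A y hy) := {g | if g.t then g.a ∈ S₂ else g.a ∈ S₁}

lemma image_ofA_union_eq_connSet (S₁ S₂ : Set A) :
    ofA '' S₁ ∪ (fun a => x A y hy * ofA a) '' S₂ = connSet S₁ S₂ := by
  ext ⟨t, a⟩
  cases t <;> simp [connSet, ofA, x, Dic.ext_iff]

def ofPair : (A → ℂ) × (A → ℂ) →ₗ[ℂ] (Dic A y hy → ℂ) where
  toFun u g := if g.t then u.2 g.a⁻¹ else u.1 g.a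
  map_add' u v := by ext g; by_cases h : g.t <;> simp [h]
  map_smul' c u := by ext g; by_cases h : g.t <;> simp [h]

lemma ofPair_surjective : Function.Surjective (ofPair : _ → Dic A y hy → ℂ) :=
  fun w => ⟨(fun a => w ⟨false, a⟩, fun a => w ⟨true, a⁻¹⟩), by ext ⟨_ | _, a⟩ <;> simp [ofPair]⟩

def charVec (π : A →* ℂ) (c : Fin 2 → ℂ) : Dic A y hy → ℂ :=
  fun g => if g.t then c 1 * π g.a⁻¹ else c 0 * π g.a

lemma charVec_ne_zero (π : A →* ℂ) {c : Fin 2 → ℂ} (hc : c ≠ 0) :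
    (charVec π c : Dic A y hy → ℂ) ≠ 0 := by
  refine fun h => hc (funext fun i => ?_)
  fin_cases i
  · simpa [charVec] using congrFun h ⟨false, 1⟩
  · simpa [charVec] using congrFun h ⟨true, 1⟩

lemma span_range_charVec [Fintype A] :
    Submodule.span ℂ (Set.range fun p : (A →* ℂ) × (Fin 2 → ℂ) =>
      (charVec p.1 p.2 : Dic A y hy → ℂ)) = ⊤ := by
  set P := Submodule.span ℂ (Set.range fun p : (A →* ℂ) × (Fin 2 → ℂ) =>
      (charVec p.1 p.2 : Dic A y hy → ℂ))
  have hle : (⊤ : Submodule ℂ ((A → ℂ) × (A → ℂ))) ≤ P.comap ofPair := by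
    rw [← Submodule.prod_top, ← span_chars_eq_top, ← LinearMap.span_inl_union_inr,
      Submodule.span_le]
    rintro _ (⟨_, ⟨π, rfl⟩, rfl⟩ | ⟨_, ⟨π, rfl⟩, rfl⟩)
    · refine Submodule.subset_span ⟨(π, ![1, 0]), ?_⟩
      ext ⟨_ | _, a⟩ <;> simp [charVec, ofPair]
    · refine Submodule.subset_span ⟨(π, ![0, 1]), ?_⟩
      ext ⟨_ | _, a⟩ <;> simp [charVec, ofPair]
  refine eq_top_iff.mpr fun w _ => ?_
  obtain ⟨u, rfl⟩ := ofPair_surjective w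
  exact hle Submodule.mem_top

variable {S₁ S₂ : Set A}

lemma inv_eq_of_inv_connSet_eq (hinv : (connSet S₁ S₂ : Set (Dic A y hy))⁻¹ = connSet S₁ S₂) :
    S₁⁻¹ = S₁ := by
  ext a
  simpa [connSet] using congrArg (⟨false, a⟩ ∈ ·) hinv

lemma smul_eq_of_inv_connSet_eq (hinv : (connSet S₁ S₂ : Set (Dic A y hy))⁻¹ = connSet S₁ S₂) :
    y • S₂ = S₂ := by
  have hy' : y⁻¹ = y := inv_eq_of_mul_eq_one_right hy
  ext a
  simpa [connSet, Set.mem_smul_set_iff_inv_smul_mem, hy'] using congrArg (⟨true, a⟩ ∈ ·) hinv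

variable [Fintype A]

noncomputable def charMatrix (π : A →* ℂ) (S₁ S₂ : Set A) : Matrix (Fin 2) (Fin 2) ℂ :=
  !![charSum π S₁, charSum π S₂⁻¹; charSum π S₂, charSum π S₁]

lemma det_smul_one_sub_charMatrix (π : A →* ℂ) (μ : ℂ) :
    (μ • 1 - charMatrix π S₁ S₂).det =
      (μ - charSum π S₁) ^ 2 - charSum π S₂ * charSum π S₂⁻¹ := by
  rw [Matrix.det_fin_two]
  simp [charMatrix]
  ring

lemma sum_connSet (F : Dic A y hy → ℂ) :
    ∑ g ∈ (connSet S₁ S₂ : Set (Dic A y hy)).toFinset, F g =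
      ∑ a ∈ S₁.toFinset, F ⟨false, a⟩ + ∑ a ∈ S₂.toFinset, F ⟨true, a⟩ := by
  rw [← sum_image (g := Dic.mk false) fun a _ b _ h => congrArg Dic.a h,
    ← sum_image (g := Dic.mk true) fun a _ b _ h => congrArg Dic.a h, ← sum_union]
  · congr 1
    ext ⟨t, a⟩
    rw [Set.mem_toFinset]
    cases t <;> simp [connSet]
  · simp [disjoint_left]

lemma adjMatrix_mulVec_charVec (h1 : 1 ∉ (connSet S₁ S₂ : Set (Dic A y hy)))
    (hinv : (connSet S₁ S₂ : Set (Dic A y hy))⁻¹ = connSet S₁ S₂) (π : A →* ℂ) (c : Fin 2 → ℂ) :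
    (cayley (connSet S₁ S₂ : Set (Dic A y hy))).adjMatrix ℂ *ᵥ charVec π c =
      charVec π (charMatrix π S₁ S₂ *ᵥ c) := by
  have hS₁ : charSum π S₁⁻¹ = charSum π S₁ := by rw [inv_eq_of_inv_connSet_eq hinv]
  have hS₂ : π y * charSum π S₂ = charSum π S₂ := by
    rw [← charSum_smul, smul_eq_of_inv_connSet_eq hinv]
  ext ⟨t, a⟩
  rw [cayley_adjMatrix_mulVec h1 hinv, sum_connSet]
  cases t
  · simp only [charVec, charMatrix, Matrix.mulVec, dotProduct, Fin.sum_univ_two, mul_t, mul_a,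
      Matrix.of_apply, Matrix.cons_val', Matrix.cons_val_zero, Matrix.cons_val_one,
      Matrix.empty_val', Matrix.cons_val_fin_one, Bool.false_eq_true, Bool.xor_false,
      Bool.xor_true, ite_true, ite_false, Bool.and_false, Bool.and_true, Bool.not_false,
      mul_one]
    rw [charSum_inv_eq_sum]
    simp only [charSum, add_mul, sum_mul]
    congr 1 <;> refine sum_congr rfl fun b _ => ?_ <;>
      simp only [mul_inv_rev, inv_inv, map_mul, map_inv] <;> ring
  · simp only [charVec, charMatrix, Matrix.mulVec, dotProduct, Fin.sum_univ_two, mul_t, mul_a,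
      Matrix.of_apply, Matrix.cons_val', Matrix.cons_val_zero, Matrix.cons_val_one,
      Matrix.empty_val', Matrix.cons_val_fin_one, Bool.false_eq_true, Bool.xor_false,
      Bool.xor_true, ite_true, ite_false, Bool.and_false, Bool.and_true, Bool.not_true,
      mul_one]
    rw [← hS₁, ← hS₂, charSum_inv_eq_sum]
    simp only [charSum, add_mul, sum_mul, mul_sum]
    rw [add_comm]
    congr 1 <;> refine sum_congr rfl fun b _ => ?_ <;>
      simp only [mul_inv_rev, map_mul, map_inv] <;> ring

theorem mem_spectrum_adjMatrix_cayley_iff (h1 : 1 ∉ (connSet S₁ S₂ : Set (Dic A y hy)))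
    (hinv : (connSet S₁ S₂ : Set (Dic A y hy))⁻¹ = connSet S₁ S₂) (μ : ℝ) :
    μ ∈ spectrum ℝ ((cayley (connSet S₁ S₂ : Set (Dic A y hy))).adjMatrix ℝ) ↔
      ∃ π : A →* ℂ, ((μ : ℂ) - charSum π S₁) ^ 2 = charSum π S₂ * charSum π S₂⁻¹ := by
  simp_rw [Matrix.mem_spectrum_iff_exists_mulVec_eq_smul, SimpleGraph.map_adjMatrix_ofReal,
    ← sub_eq_zero (b := _ * _), ← det_smul_one_sub_charMatrix]
  set N := (cayley (connSet S₁ S₂ : Set (Dic A y hy))).adjMatrix ℂ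
  set B := (μ : ℂ) • 1 - N
  have hB : ∀ π c, B *ᵥ charVec π c = charVec π (((μ : ℂ) • 1 - charMatrix π S₁ S₂) *ᵥ c) := by
    intro π c
    rw [Matrix.sub_mulVec, adjMatrix_mulVec_charVec h1 hinv, Matrix.sub_mulVec,
      Matrix.smul_mulVec, Matrix.one_mulVec, Matrix.smul_mulVec, Matrix.one_mulVec]
    ext ⟨_ | _, a⟩ <;> simp [charVec] <;> ring
  have hker : ∀ v, B *ᵥ v = 0 ↔ N *ᵥ v = (μ : ℂ) • v := fun v => by
    rw [Matrix.sub_mulVec, Matrix.smul_mulVec, Matrix.one_mulVec, sub_eq_zero, eq_comm]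
  simp_rw [← hker]
  constructor
  · rintro ⟨v, hv0, hv⟩
    by_contra! hdet
    -- every `charVec π c` is then in the range of `B`, and these span everything
    have hsurj : Function.Surjective (B *ᵥ ·) := by
      rw [← Matrix.coe_mulVecLin, ← LinearMap.range_eq_top, eq_top_iff, ← span_range_charVec,
        Submodule.span_le]
      rintro _ ⟨⟨π, c⟩, rfl⟩
      have hunit : IsUnit ((μ : ℂ) • 1 - charMatrix π S₁ S₂).det := (hdet π).isUnit
      exact ⟨charVec π (((μ : ℂ) • 1 - charMatrix π S₁ S₂)⁻¹ *ᵥ c), by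
        rw [Matrix.mulVecLin_apply, hB, Matrix.mulVec_mulVec, Matrix.mul_nonsing_inv _ hunit,
          Matrix.one_mulVec]⟩
    have hinj := Matrix.mulVec_injective_iff_isUnit.mpr
      (Matrix.mulVec_surjective_iff_isUnit.mp hsurj)
    exact hv0 (hinj (hv.trans (Matrix.mulVec_zero B).symm))
  · rintro ⟨π, hπ⟩
    obtain ⟨c, hc0, hc⟩ := Matrix.exists_mulVec_eq_zero_iff.mpr hπ
    exact ⟨charVec π c, charVec_ne_zero π hc0, by rw [hB, hc]; ext ⟨_ | _, a⟩ <;> simp [charVec]⟩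

lemma exists_int_charSum_of_isIntegralGraph (h1 : 1 ∉ (connSet S₁ S₂ : Set (Dic A y hy)))
    (hinv : (connSet S₁ S₂ : Set (Dic A y hy))⁻¹ = connSet S₁ S₂)
    (hInt : IsIntegralGraph (cayley (connSet S₁ S₂ : Set (Dic A y hy)))) (π : A →* ℂ) :
    (∃ z : ℤ, charSum π S₁ = z) ∧ ∃ α : ℤ, charSum π S₂ * charSum π S₂⁻¹ = α ^ 2 := by
  set p := charSum π S₁
  set r := ‖charSum π S₂‖
  have hp : (p.re : ℂ) = p := Complex.conj_eq_iff_re.mp <| by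
    rw [← charSum_inv, inv_eq_of_inv_connSet_eq hinv]
  have hq : charSum π S₂ * charSum π S₂⁻¹ = (r : ℂ) ^ 2 := by
    rw [charSum_inv, Complex.mul_conj, Complex.normSq_eq_norm_sq]
    push_cast; rfl
  have hroot : ∀ ε : ℝ, ε ^ 2 = 1 → ∃ k : ℤ, (k : ℝ) = p.re + ε * r := fun ε hε =>
    hInt _ <| (mem_spectrum_adjMatrix_cayley_iff h1 hinv _).mpr ⟨π, by
      rw [hq]; push_cast; rw [hp]
      linear_combination (r : ℂ) ^ 2 * (by exact_mod_cast hε : (ε : ℂ) ^ 2 = 1)⟩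
  obtain ⟨k₁, hk₁⟩ := hroot 1 (by norm_num)
  obtain ⟨k₂, hk₂⟩ := hroot (-1) (by norm_num)
  obtain ⟨z, hz⟩ := exists_int_eq_of_isIntegral_of_eq_ratCast (x := p) (r := (k₁ + k₂) / 2)
    (isIntegral_charSum π S₁) (by
      rw [← hp]; exact_mod_cast (show p.re = ((k₁ + k₂ : ℚ) / 2 : ℚ) by push_cast; linarith))
  have hre : p.re = z := by rw [hz, Complex.intCast_re]
  refine ⟨⟨z, hz⟩, k₁ - z, ?_⟩
  rw [hq, show r = ((k₁ - z : ℤ) : ℝ) by push_cast; linarith]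
  norm_cast

end Dic

theorem cayley_dic_integral_iff_general {A : Type*} [CommGroup A] [Fintype A]
    (y : A) (hy : y * y = 1)
    (S : Set (Dic A y hy)) (S₁ S₂ : Set A)
    (hS : S = Dic.ofA '' S₁ ∪ (fun a => Dic.x A y hy * Dic.ofA a) '' S₂)
    (h1S : (1 : Dic A y hy) ∉ S) (hSinv : S⁻¹ = S) :
    IsIntegralGraph (cayley S) ↔
      InBoolAlg A S₁ ∧
        ∀ π : A →* ℂ, (∃ a : A, π (a * a) ≠ 1) →
          ∃ α : ℤ, (∑ s ∈ S₂.toFinset, π s) * (∑ s ∈ (S₂⁻¹).toFinset, π s) = (α : ℂ) ^ 2 := by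
  rw [Dic.image_ofA_union_eq_connSet] at hS
  subst hS
  constructor
  · intro hInt
    have hπ := Dic.exists_int_charSum_of_isIntegralGraph h1S hSinv hInt
    exact ⟨inBoolAlg_iff_forall_charSum_int.mpr fun π => (hπ π).1, fun π _ => (hπ π).2⟩
  · rintro ⟨hS₁, hS₂⟩ μ hμ
    obtain ⟨π, hπ⟩ := (Dic.mem_spectrum_adjMatrix_cayley_iff h1S hSinv μ).mp hμ
    obtain ⟨z, hz⟩ := inBoolAlg_iff_forall_charSum_int.mp hS₁ π
    obtain ⟨β, hβ⟩ : ∃ β : ℤ, charSum π S₂ * charSum π S₂⁻¹ = β ^ 2 := by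
      by_cases hsq : ∀ a, π (a * a) = 1
      · exact exists_int_charSum_mul_charSum_inv_of_sq_eq_one hsq S₂
      · exact hS₂ π (not_forall.mp hsq)
    exact exists_int_eq_of_sub_sq_eq_sq (z := z) (β := β) (by rw [← hz, hπ, hβ])

/-- Theorem 3.1: `Cay(Dic(A,y), S)` with `S = S₁ ∪ xS₂` is integral iff
`S₁ ∈ B(A)` and, for every one-dimensional representation `π : A → ℂ*` of `A` whose kernel
does not contain `A²`, one has `π(S₂)·π(S₂⁻¹) = α²` for some integer `α`. -/
theorem cayley_dic_integral_iff {A : Type*} [CommGroup A] [Fintype A]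
    (hA : Even (Fintype.card A)) (hexp : 3 ≤ Monoid.exponent A)
    (y : A) (hy : y * y = 1) (hy1 : y ≠ 1)
    (S : Set (Dic A y hy)) (S₁ S₂ : Set A)
    (hS : S = Dic.ofA '' S₁ ∪ (fun a => Dic.x A y hy * Dic.ofA a) '' S₂)
    (h1S : (1 : Dic A y hy) ∉ S) (hSinv : S⁻¹ = S) :
    IsIntegralGraph (cayley S) ↔
      InBoolAlg A S₁ ∧
        ∀ π : A →* ℂ, (∃ a : A, π (a * a) ≠ 1) →
          ∃ α : ℤ, (∑ s ∈ S₂.toFinset, π s) * (∑ s ∈ (S₂⁻¹).toFinset, π s) = (α : ℂ) ^ 2 :=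
  cayley_dic_integral_iff_general y hy S S₁ S₂ hS h1S hSinv
end

section
/- For i = 1, 2, let πᵢ : A → ℂ* be a one-dimensional representation of A with A² ⊄ ker(πᵢ). Then the representations R_{π₁} and R_{π₂} of Dic(A,y) are equivalent if and only if π₁ = π₂ or π₁ = conj(π₂) (the complex-conjugate representation). -/
/-! On `A`, `R_π` is `diag(π, π⁻¹)`. An invertible intertwiner `T` has a nonzero entry `T i 0`,
and comparing `(i, 0)` entries on `A` gives `π₁ = π₂` (`i = 0`) or `π₁ = π₂ ∘ inv` (`i = 1`).
Conversely `R_π(x)` intertwines `R_{π ∘ inv}` with `R_π`. Finally `π ∘ inv = conj π`, as `π`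
takes values in the roots of unity. -/

open scoped Classical Pointwise

lemma Matrix.apply_eq_of_mul_diagonal_eq_diagonal_mul {n R : Type*} [Fintype n] [DecidableEq n]
    [CommRing R] [NoZeroDivisors R] {T : Matrix n n R} {d₁ d₂ : n → R}
    (h : T * Matrix.diagonal d₁ = Matrix.diagonal d₂ * T) {i j : n} (hij : T i j ≠ 0) :
    d₁ j = d₂ i := by
  have hentry := congrFun (congrFun h i) j
  rw [Matrix.mul_diagonal, Matrix.diagonal_mul, mul_comm (d₂ i)] at hentry
  exact mul_left_cancel₀ hij hentry

lemma Matrix.exists_apply_ne_zero_of_isUnit {n R : Type*} [Fintype n] [DecidableEq n]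
    [CommRing R] [Nontrivial R] {T : Matrix n n R} (hT : IsUnit T) (j : n) : ∃ i, T i j ≠ 0 := by
  by_contra! h
  exact ((Matrix.isUnit_iff_isUnit_det T).mp hT).ne_zero (Matrix.det_eq_zero_of_column_eq_zero j h)

lemma conjHom_eq_comp_inv {A : Type*} [CommGroup A] [Finite A] (π : A →* ℂ) :
    conjHom π = π.comp invMonoidHom := by
  ext a
  have hnorm : ‖π a‖ = 1 :=
    Complex.norm_eq_one_of_pow_eq_one (by rw [← map_pow, pow_card_eq_one', map_one])
      Nat.card_pos.ne'
  simp [conjHom, ← Complex.inv_eq_conj hnorm, π.map_inv]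

section Rpi

variable {A : Type*} [CommGroup A] {y : A} {hy : y * y = 1}

lemma Rpi_ofA (π : A →* ℂ) (a : A) :
    Rpi π (Dic.ofA a : Dic A y hy) = Matrix.diagonal ![π a, π a⁻¹] := by
  simp [Rpi, Dic.ofA, Matrix.diagonal_vec2]

theorem eq_or_eq_comp_inv_of_intertwines {π₁ π₂ : A →* ℂ} {T : Matrix (Fin 2) (Fin 2) ℂ}
    (hT : IsUnit T) (h : ∀ g : Dic A y hy, T * Rpi π₁ g = Rpi π₂ g * T) :
    π₁ = π₂ ∨ π₁ = π₂.comp invMonoidHom := by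
  obtain ⟨i, hi⟩ := Matrix.exists_apply_ne_zero_of_isUnit hT 0
  have key (a : A) : π₁ a = ![π₂ a, π₂ a⁻¹] i := by
    have ha := h (Dic.ofA a)
    rw [Rpi_ofA, Rpi_ofA] at ha
    exact Matrix.apply_eq_of_mul_diagonal_eq_diagonal_mul ha hi
  fin_cases i
  · exact Or.inl (MonoidHom.ext key)
  · exact Or.inr (MonoidHom.ext key)

theorem Rpi_x_mul_Rpi_comp_inv (π : A →* ℂ) (g : Dic A y hy) :
    Rpi π (Dic.x A y hy) * Rpi (π.comp invMonoidHom) g = Rpi π g * Rpi π (Dic.x A y hy) := by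
  have hyy : π y⁻¹ = π y := by rw [inv_eq_of_mul_eq_one_right hy]
  obtain ⟨_ | _, a⟩ := g <;> simp [Rpi, Dic.x, hyy, mul_comm]

lemma isUnit_Rpi_x (π : A →* ℂ) : IsUnit (Rpi π (Dic.x A y hy)) := by
  rw [Matrix.isUnit_iff_isUnit_det]
  simpa [Rpi, Dic.x] using (Group.isUnit y).map π

end Rpi

theorem Rpi_equiv_iff_general {A : Type*} [CommGroup A] [Fintype A]
    (y : A) (hy : y * y = 1)
    (π₁ π₂ : A →* ℂ) :
    (∃ T : Matrix (Fin 2) (Fin 2) ℂ, IsUnit T ∧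
        ∀ g : Dic A y hy, T * Rpi π₁ g = Rpi π₂ g * T) ↔
      π₁ = π₂ ∨ π₁ = conjHom π₂ := by
  rw [conjHom_eq_comp_inv]
  constructor
  · rintro ⟨T, hT, h⟩
    exact eq_or_eq_comp_inv_of_intertwines hT h
  · rintro (rfl | rfl)
    · exact ⟨1, isUnit_one, by simp⟩
    · exact ⟨_, isUnit_Rpi_x π₂, Rpi_x_mul_Rpi_comp_inv π₂⟩

/-- Lemma 3.3: for one-dimensional representations `π₁, π₂ : A → ℂ*` with
`A² ⊄ ker πᵢ`, the representations `R_{π₁}` and `R_{π₂}` of `Dic(A,y)` are equivalent iff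
`π₁ = π₂` or `π₁ = conj(π₂)`. -/
theorem Rpi_equiv_iff {A : Type*} [CommGroup A] [Fintype A]
    (hA : Even (Fintype.card A)) (hexp : 3 ≤ Monoid.exponent A)
    (y : A) (hy : y * y = 1) (hy1 : y ≠ 1)
    (π₁ π₂ : A →* ℂ)
    (h₁ : ∃ a : A, π₁ (a * a) ≠ 1) (h₂ : ∃ a : A, π₂ (a * a) ≠ 1) :
    (∃ T : Matrix (Fin 2) (Fin 2) ℂ, IsUnit T ∧
        ∀ g : Dic A y hy, T * Rpi π₁ g = Rpi π₂ g * T) ↔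
      π₁ = π₂ ∨ π₁ = conjHom π₂ :=
  Rpi_equiv_iff_general y hy π₁ π₂
end

section
/- Write |A/A²| = 2ⁿ. Then Dic(A,y) has exactly 2^{n+1} pairwise inequivalent one-dimensional complex representations, exactly (|A| − 2ⁿ)/2 pairwise inequivalent irreducible two-dimensional complex representations, and no irreducible complex representation of dimension at least 3. -/
open scoped Classical Pointwise

/-- A monoid-hom `ρ : G →* M₂(ℂ)` (viewed as a two-dimensional representation) is irreducible
if the only subspaces of `ℂ²` invariant under all `ρ g` are `0` and `ℂ²`. -/
def IsIrredMatRep {G : Type*} [Group G] (ρ : G →* Matrix (Fin 2) (Fin 2) ℂ) : Prop :=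
  ∀ W : Submodule ℂ (Fin 2 → ℂ), (∀ g : G, ∀ v ∈ W, (ρ g).mulVec v ∈ W) → W = ⊥ ∨ W = ⊤

/-- Two matrix representations are equivalent if they are intertwined by an invertible matrix. -/
def MatRepEquiv {G : Type*} [Group G] (ρ₁ ρ₂ : G →* Matrix (Fin 2) (Fin 2) ℂ) : Prop :=
  ∃ T : Matrix (Fin 2) (Fin 2) ℂ, IsUnit T ∧ ∀ g : G, T * ρ₁ g = ρ₂ g * T

/-- The type of irreducible two-dimensional complex matrix representations of `G`. -/
def IrredTwoDimRep (G : Type*) [Group G] : Type _ :=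
  {ρ : G →* Matrix (Fin 2) (Fin 2) ℂ // IsIrredMatRep ρ}

/-!
Restricted to `A`, an irreducible representation of `Dic(A,y)` has a common eigenvector `v` with
character `π`; then `x v` is an eigenvector with character `π ∘ inv` and `x (x v) = π(y) v`, so
`span {v, x v}` is invariant and the representation has dimension at most two. A one-dimensional
representation is a character `π` of `A` with `π = π ∘ inv` (i.e. trivial on `A²`) together with a
square root of `π(y) = ±1`, which gives `2 · |A/A²|` of them. In dimension two, `π ≠ π ∘ inv` and
the representation is equivalent to `R_π`; comparing traces shows `R_π ≅ R_σ` iff `σ ∈ {π, π ∘ inv}`,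
so the classes are the `(|A| - |A/A²|)/2` orbits of `π ↦ π ∘ inv` on the remaining characters.
-/
theorem Module.End.exists_common_eigenvector {K V ι : Type*} [Field K] [IsAlgClosed K]
    [AddCommGroup V] [Module K V] [FiniteDimensional K V] [Nontrivial V]
    (f : ι → Module.End K V) (hf : ∀ i j, Commute (f i) (f j)) :
    ∃ v : V, v ≠ 0 ∧ ∀ i, ∃ c : K, f i v = c • v := by
  -- On a minimal nonzero invariant subspace `W`, the eigenspaces of each `f i` are invariant
  -- subspaces of `W`, so each `f i` acts on `W` as a scalar.
  let S : Set (Submodule K V) := {W | W ≠ ⊥ ∧ ∀ i, ∀ v ∈ W, f i v ∈ W}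
  obtain ⟨W, ⟨hW0, hWf⟩, hmin⟩ := wellFounded_lt.has_min S ⟨⊤, top_ne_bot, fun _ _ _ => trivial⟩
  have hscalar : ∀ i, ∃ c : K, ∀ v ∈ W, f i v = c • v := by
    intro i
    have : Nontrivial W := Submodule.nontrivial_iff_ne_bot.mpr hW0
    obtain ⟨c, hc⟩ := Module.End.exists_eigenvalue ((f i).restrict (hWf i))
    obtain ⟨u, hu⟩ := hc.exists_hasEigenvector
    let W' := W ⊓ (f i).eigenspace c
    have hW' : W' ∈ S := by
      refine ⟨fun h => hu.2 ?_, fun j v hv => ⟨hWf j v hv.1, ?_⟩⟩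
      · have : (u : V) ∈ W' := ⟨u.2, Module.End.mem_eigenspace_iff.2 (by
          simpa using congrArg Subtype.val hu.apply_eq_smul)⟩
        simpa [h] using this
      · have := Module.End.mem_eigenspace_iff.1 hv.2
        change f j v ∈ (f i).eigenspace c
        rw [Module.End.mem_eigenspace_iff, ← Module.End.mul_apply, (hf i j).eq,
          Module.End.mul_apply, this, map_smul]
    have : W' = W := (inf_le_left.lt_or_eq).resolve_left (hmin W' hW')
    exact ⟨c, fun v hv => Module.End.mem_eigenspace_iff.1 (this ▸ hv : v ∈ W').2⟩
  obtain ⟨v, hvW, hv0⟩ := W.exists_mem_ne_zero_of_ne_bot hW0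
  exact ⟨v, hv0, fun i => (hscalar i).imp fun c hc => hc v hvW⟩

theorem Representation.exists_monoidHom_apply_eq_smul {k G V : Type*} [Field k] [Monoid G]
    [AddCommGroup V] [Module k V] (ρ : Representation k G V) {v : V} (hv : v ≠ 0)
    (h : ∀ g, ∃ c : k, ρ g v = c • v) : ∃ χ : G →* k, ∀ g, ρ g v = χ g • v := by
  choose c hc using h
  have hinj := smul_left_injective k hv
  refine ⟨{ toFun := c, map_one' := hinj ?_, map_mul' := fun g h => hinj ?_ }, hc⟩
  · simp only [← hc, map_one, Module.End.one_apply, one_smul]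
  · dsimp only
    rw [← hc, map_mul, Module.End.mul_apply, hc, map_smul, hc, smul_smul, mul_comm]

theorem MonoidHom.eq_or_eq_of_forall_eq_or_eq {G M : Type*} [Group G] [Monoid M]
    {f g h : G →* M} (H : ∀ a, f a = g a ∨ f a = h a) : f = g ∨ f = h := by
  by_contra! hne
  obtain ⟨a, ha⟩ := DFunLike.ne_iff.1 hne.1
  obtain ⟨b, hb⟩ := DFunLike.ne_iff.1 hne.2
  have hah : f a = h a := (H a).resolve_left ha
  have hbg : f b = g b := (H b).resolve_right hb
  rcases H (a * b) with hab | hab <;> rw [map_mul, map_mul] at hab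
  · rw [hbg] at hab
    exact ha ((IsUnit.map g (Group.isUnit b)).mul_left_injective hab)
  · rw [hah] at hab
    exact hb ((IsUnit.map h (Group.isUnit a)).mul_right_injective hab)

theorem Nat.card_eq_two_mul_of_fiber_eq_pair {α β : Type*} [Finite α] {F : α → β}
    (hF : Function.Surjective F) (σ : α → α) (hσ : ∀ a, σ a ≠ a)
    (hfib : ∀ a b, F a = F b ↔ b = a ∨ b = σ a) : Nat.card α = 2 * Nat.card β := by
  have : Finite β := Finite.of_surjective F hF
  have : Fintype β := Fintype.ofFinite β
  have hfiber : ∀ b, Nat.card {a // F a = b} = 2 := by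
    intro b
    obtain ⟨a₀, rfl⟩ := hF b
    have : {a | F a = F a₀} = {a₀, σ a₀} := by
      ext a; exact eq_comm.trans (hfib a₀ a)
    change Nat.card ({a | F a = F a₀} : Set α) = 2
    rw [this, Nat.card_coe_set_eq, Set.ncard_pair (hσ a₀).symm]
  rw [← Nat.card_congr (Equiv.sigmaFiberEquiv F), Nat.card_sigma]
  simp [hfiber, mul_comm]

theorem Complex.card_mul_self_eq {z : ℂ} (hz : z ≠ 0) : Nat.card {c : ℂ // c * c = z} = 2 := by
  obtain ⟨s, rfl⟩ := IsAlgClosed.exists_eq_mul_self z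
  have hs : s ≠ -s := by simpa [eq_neg_iff_add_eq_zero, ← two_mul] using left_ne_zero_of_mul hz
  have : {c : ℂ | c * c = s * s} = {s, -s} := by
    ext c; simp [mul_self_eq_mul_self_iff]
  change Nat.card ({c : ℂ | c * c = s * s} : Set ℂ) = 2
  rw [this, Nat.card_coe_set_eq, Set.ncard_pair hs]

theorem card_monoidHom_complex (G : Type*) [CommGroup G] [Finite G] :
    Nat.card (G →* ℂ) = Nat.card G := by
  have : NeZero (Monoid.exponent G : ℂ) :=
    ⟨Nat.cast_ne_zero.2 Monoid.exponent_ne_zero_of_finite⟩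
  rw [Nat.card_congr MonoidHom.toHomUnitsMulEquiv.toEquiv,
    CommGroup.card_monoidHom_of_hasEnoughRootsOfUnity]

instance finite_monoidHom_complex (G : Type*) [CommGroup G] [Finite G] : Finite (G →* ℂ) :=
  Nat.finite_of_card_ne_zero (by rw [card_monoidHom_complex]; exact Nat.card_pos.ne')

def QuotientGroup.liftHomEquiv {G M : Type*} [Group G] [Monoid M] (N : Subgroup G) [N.Normal] :
    {φ : G →* M // N ≤ φ.ker} ≃ (G ⧸ N →* M) where
  toFun φ := QuotientGroup.lift N φ.1 φ.2
  invFun ψ := ⟨ψ.comp (QuotientGroup.mk' N), fun g hg => by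
    simp [(QuotientGroup.eq_one_iff g).2 hg]⟩
  left_inv _ := rfl
  right_inv _ := QuotientGroup.monoidHom_ext N rfl

theorem MonoidHom.comp_invMonoidHom_eq_self_iff {G M : Type*} [CommGroup G] [Monoid M]
    (π : G →* M) : π.comp invMonoidHom = π ↔ (powMonoidHom 2 : G →* G).range ≤ π.ker := by
  constructor
  · rintro h _ ⟨a, rfl⟩
    rw [MonoidHom.mem_ker, powMonoidHom_apply, pow_two, map_mul]
    nth_rw 1 [← h]
    rw [MonoidHom.comp_apply, invMonoidHom_apply, ← map_mul, inv_mul_cancel, map_one]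
  · intro h
    ext a
    have : π (a ^ 2) = 1 := h ⟨a, rfl⟩
    rw [MonoidHom.comp_apply, invMonoidHom_apply, ← mul_one (π a⁻¹), ← this, ← map_mul,
      pow_two, inv_mul_cancel_left]

theorem card_monoidHom_comp_invMonoidHom_eq_self (G : Type*) [CommGroup G] [Finite G] :
    Nat.card {π : G →* ℂ // π.comp invMonoidHom = π} =
      Nat.card (G ⧸ (powMonoidHom 2 : G →* G).range) := by
  rw [← card_monoidHom_complex (G ⧸ _), ← Nat.card_congr (QuotientGroup.liftHomEquiv _),
    Nat.card_congr (Equiv.subtypeEquivRight fun π => π.comp_invMonoidHom_eq_self_iff)]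

namespace MatRepEquiv

variable {G : Type*} [Group G] {ρ₁ ρ₂ ρ₃ : G →* Matrix (Fin 2) (Fin 2) ℂ}

theorem refl (ρ : G →* Matrix (Fin 2) (Fin 2) ℂ) : MatRepEquiv ρ ρ :=
  ⟨1, isUnit_one, fun g => by rw [one_mul, mul_one]⟩

theorem symm (h : MatRepEquiv ρ₁ ρ₂) : MatRepEquiv ρ₂ ρ₁ := by
  obtain ⟨_, ⟨U, rfl⟩, h⟩ := h
  refine ⟨↑U⁻¹, U⁻¹.isUnit, fun g => ?_⟩
  rw [Units.inv_mul_eq_iff_eq_mul, ← mul_assoc, h g, mul_assoc, Units.mul_inv, mul_one]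

theorem trans (h₁₂ : MatRepEquiv ρ₁ ρ₂) (h₂₃ : MatRepEquiv ρ₂ ρ₃) : MatRepEquiv ρ₁ ρ₃ := by
  obtain ⟨T, hT, h₁₂⟩ := h₁₂
  obtain ⟨S, hS, h₂₃⟩ := h₂₃
  exact ⟨S * T, hS.mul hT, fun g => by rw [mul_assoc, h₁₂ g, ← mul_assoc, h₂₃ g, mul_assoc]⟩

theorem equivalence : Equivalence (MatRepEquiv (G := G)) :=
  ⟨refl, symm, trans⟩

theorem trace_eq (h : MatRepEquiv ρ₁ ρ₂) (g : G) : (ρ₁ g).trace = (ρ₂ g).trace := by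
  obtain ⟨_, ⟨U, rfl⟩, h⟩ := h
  rw [← Matrix.trace_units_conj U (ρ₁ g), h g, mul_assoc, Units.mul_inv, mul_one]

end MatRepEquiv


namespace Dic

variable {A : Type*} [CommGroup A] {y : A} {hy : y * y = 1}

def ofAHom : A →* Dic A y hy where
  toFun := ofA
  map_one' := rfl
  map_mul' a b := by ext <;> simp [ofA]

@[simp] lemma ofAHom_t (a : A) : (ofAHom a : Dic A y hy).t = false := rfl

@[simp] lemma ofAHom_a (a : A) : (ofAHom a : Dic A y hy).a = a := rfl

lemma x_mul_x : x A y hy * x A y hy = ofAHom y := by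
  ext <;> simp [x]

lemma ofAHom_mul_x (a : A) : ofAHom a * x A y hy = x A y hy * ofAHom a⁻¹ := by
  ext <;> simp [x]

lemma mk_true (a : A) : (⟨true, a⟩ : Dic A y hy) = x A y hy * ofAHom a := by
  ext <;> simp [x]

theorem induction_on {P : Dic A y hy → Prop} (g : Dic A y hy) (ofA : ∀ a, P (ofAHom a))
    (x : P (x A y hy)) (mul : ∀ g h, P g → P h → P (g * h)) : P g := by
  obtain ⟨_ | _, a⟩ := g
  · exact ofA a
  · rw [mk_true]
    exact mul _ _ x (ofA a)

theorem hom_ext {M : Type*} [Monoid M] {φ ψ : Dic A y hy →* M}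
    (hA : φ.comp ofAHom = ψ.comp ofAHom) (hx : φ (x A y hy) = ψ (x A y hy)) : φ = ψ :=
  MonoidHom.ext fun g =>
    g.induction_on (P := fun g => φ g = ψ g) (DFunLike.congr_fun hA) hx fun g h hg hh => by
      rw [map_mul, map_mul, hg, hh]

def lift {M : Type*} [Monoid M] (f : A →* M) (m : M) (hm : m * m = f y)
    (hfm : ∀ a, f a * m = m * f a⁻¹) : Dic A y hy →* M where
  toFun g := (if g.t then m else 1) * f g.a
  map_one' := by simp
  map_mul' := by
    rintro ⟨_ | _, a⟩ ⟨_ | _, b⟩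
    · simp
    · simp [← mul_assoc, hfm]
    · simp [mul_assoc]
    · simp only [mul_t, mul_a, Bool.and_self, ite_true, Bool.xor_self, Bool.false_eq_true,
        ite_false, one_mul]
      rw [mul_assoc m, ← mul_assoc (f a), hfm, ← mul_assoc, ← mul_assoc, hm, ← map_mul, ← map_mul]
      exact congrArg f (mul_rotate y a⁻¹ b).symm

@[simp] lemma lift_ofAHom {M : Type*} [Monoid M] (f : A →* M) (m : M) (hm : m * m = f y)
    (hfm : ∀ a, f a * m = m * f a⁻¹) (a : A) : lift (hy := hy) f m hm hfm (ofAHom a) = f a := by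
  simp [lift]

@[simp] lemma lift_x {M : Type*} [Monoid M] (f : A →* M) (m : M) (hm : m * m = f y)
    (hfm : ∀ a, f a * m = m * f a⁻¹) : lift (hy := hy) f m hm hfm (x A y hy) = m := by
  simp [lift, x]

lemma comp_ofAHom_comp_invMonoidHom {M : Type*} [CommMonoid M] (ρ : Dic A y hy →* M) :
    (ρ.comp ofAHom).comp invMonoidHom = ρ.comp ofAHom := by
  ext a
  have : ofAHom a⁻¹ = (x A y hy)⁻¹ * ofAHom a * x A y hy := by
    rw [mul_assoc, ofAHom_mul_x, inv_mul_cancel_left]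
  change ρ (ofAHom a⁻¹) = ρ (ofAHom a)
  rw [this, map_mul, map_mul, mul_right_comm, ← map_mul, inv_mul_cancel, map_one, one_mul]

def homEquiv {M : Type*} [CommMonoid M] : (Dic A y hy →* M) ≃
    Σ π : {π : A →* M // π.comp invMonoidHom = π}, {m : M // m * m = π.1 y} where
  toFun ρ := ⟨⟨ρ.comp ofAHom, comp_ofAHom_comp_invMonoidHom ρ⟩,
    ⟨ρ (x A y hy), by rw [← map_mul, x_mul_x]; rfl⟩⟩
  invFun p := lift p.1.1 p.2.1 p.2.2 fun a => by
    rw [mul_comm, ← DFunLike.congr_fun p.1.2 a]; rfl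
  left_inv ρ := hom_ext (MonoidHom.ext fun a => by simp) (by simp)
  right_inv p := Sigma.subtype_ext (Subtype.ext (MonoidHom.ext fun a => by simp)) (by simp)

theorem card_monoidHom_complex_eq_two_mul [Finite A] :
    Nat.card (Dic A y hy →* ℂ) = 2 * Nat.card {π : A →* ℂ // π.comp invMonoidHom = π} := by
  have : Fintype {π : A →* ℂ // π.comp invMonoidHom = π} := Fintype.ofFinite _
  have hroots (π : {π : A →* ℂ // π.comp invMonoidHom = π}) :
      Nat.card {m : ℂ // m * m = π.1 y} = 2 :=
    Complex.card_mul_self_eq (IsUnit.map π.1 (Group.isUnit y)).ne_zero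
  have (π : {π : A →* ℂ // π.comp invMonoidHom = π}) : Finite {m : ℂ // m * m = π.1 y} :=
    Nat.finite_of_card_ne_zero (by rw [hroots]; norm_num)
  rw [Nat.card_congr homEquiv, Nat.card_sigma]
  simp [hroots, mul_comm]

section Representation

variable {V : Type*} [AddCommGroup V] [Module ℂ V] (ρ : Representation ℂ (Dic A y hy) V)

theorem span_invariant_of_generators {s : Set V}
    (hA : ∀ a, ∀ v ∈ s, ρ (ofAHom a) v ∈ Submodule.span ℂ s)
    (hx : ∀ v ∈ s, ρ (x A y hy) v ∈ Submodule.span ℂ s) :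
    ∀ g, ∀ v ∈ Submodule.span ℂ s, ρ g v ∈ Submodule.span ℂ s := by
  have key (f : Module.End ℂ V) (hf : ∀ v ∈ s, f v ∈ Submodule.span ℂ s) :
      ∀ v ∈ Submodule.span ℂ s, f v ∈ Submodule.span ℂ s :=
    fun _ hv => (Submodule.span_le (p := (Submodule.span ℂ s).comap f)).2 hf hv
  intro g
  refine g.induction_on (P := fun g => ∀ v ∈ Submodule.span ℂ s, ρ g v ∈ Submodule.span ℂ s)
    (fun a => key _ (hA a)) (key _ hx) fun g h hg hh v hv => ?_
  rw [map_mul, Module.End.mul_apply]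
  exact hg _ (hh v hv)

theorem ofAHom_apply_x_apply {π : A →* ℂ} {v : V} (hv : ∀ a, ρ (ofAHom a) v = π a • v) (a : A) :
    ρ (ofAHom a) (ρ (x A y hy) v) = π a⁻¹ • ρ (x A y hy) v := by
  rw [← Module.End.mul_apply, ← map_mul, ofAHom_mul_x, map_mul, Module.End.mul_apply, hv,
    map_smul]

theorem x_apply_x_apply {π : A →* ℂ} {v : V} (hv : ∀ a, ρ (ofAHom a) v = π a • v) :
    ρ (x A y hy) (ρ (x A y hy) v) = π y • v := by
  rw [← Module.End.mul_apply, ← map_mul, x_mul_x, hv]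

variable [FiniteDimensional ℂ V]

theorem exists_eigenvector_span_eq_top [Nontrivial V]
    (hirr : ∀ W : Submodule ℂ V, (∀ g, ∀ v ∈ W, ρ g v ∈ W) → W = ⊥ ∨ W = ⊤) :
    ∃ (π : A →* ℂ) (v : V), v ≠ 0 ∧ (∀ a, ρ (ofAHom a) v = π a • v) ∧
      Submodule.span ℂ {v, ρ (x A y hy) v} = ⊤ := by
  obtain ⟨v, hv0, hv⟩ := Module.End.exists_common_eigenvector (fun a => ρ (ofAHom a))
    fun a b => ((Commute.all a b).map ofAHom).map ρ
  obtain ⟨π, hπ⟩ : ∃ π : A →* ℂ, ∀ a, ρ (ofAHom a) v = π a • v :=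
    Representation.exists_monoidHom_apply_eq_smul (ρ.comp ofAHom) hv0 hv
  have hmem (u : V) (hu : u = v ∨ u = ρ (x A y hy) v) (c : ℂ) :
      c • u ∈ Submodule.span ℂ {v, ρ (x A y hy) v} :=
    Submodule.smul_mem _ _ (Submodule.subset_span hu)
  refine ⟨π, v, hv0, hπ, (hirr _ (span_invariant_of_generators ρ ?_ ?_)).resolve_left ?_⟩
  · rintro a _ (rfl | rfl)
    · rw [hπ]; exact hmem _ (.inl rfl) _
    · rw [ofAHom_apply_x_apply ρ hπ]; exact hmem _ (.inr rfl) _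
  · rintro _ (rfl | rfl)
    · simpa using hmem _ (.inr rfl) 1
    · rw [x_apply_x_apply ρ hπ]; exact hmem _ (.inl rfl) _
  · intro h
    exact hv0 ((Submodule.mem_bot ℂ).1 (h ▸ Submodule.subset_span (.inl rfl)))

theorem finrank_le_two
    (hirr : ∀ W : Submodule ℂ V, (∀ g, ∀ v ∈ W, ρ g v ∈ W) → W = ⊥ ∨ W = ⊤) :
    Module.finrank ℂ V ≤ 2 := by
  cases subsingleton_or_nontrivial V with
  | inl _ => simp [Module.finrank_zero_of_subsingleton]
  | inr _ =>
    obtain ⟨-, v, -, -, hspan⟩ := exists_eigenvector_span_eq_top ρ hirr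
    have := finrank_span_finset_le_card (R := ℂ) ({v, ρ (x A y hy) v} : Finset V)
    rw [Finset.coe_pair, Set.finrank, hspan, finrank_top] at this
    exact this.trans Finset.card_le_two

theorem finrank_le_one_of_forall_eq_smul
    (hirr : ∀ W : Submodule ℂ V, (∀ g, ∀ v ∈ W, ρ g v ∈ W) → W = ⊥ ∨ W = ⊤)
    (χ : A → ℂ) (hχ : ∀ a (u : V), ρ (ofAHom a) u = χ a • u) : Module.finrank ℂ V ≤ 1 := by
  cases subsingleton_or_nontrivial V with
  | inl _ => simp [Module.finrank_zero_of_subsingleton]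
  | inr _ =>
    obtain ⟨c, hc⟩ := Module.End.exists_eigenvalue (ρ (x A y hy))
    obtain ⟨u, hu⟩ := hc.exists_hasEigenvector
    have hmem (c : ℂ) : c • u ∈ ℂ ∙ u :=
      Submodule.smul_mem _ _ (Submodule.mem_span_singleton_self u)
    have hL := span_invariant_of_generators ρ (s := {u})
      (by rintro a _ rfl; rw [hχ]; exact hmem _)
      (by rintro _ rfl; rw [hu.apply_eq_smul]; exact hmem _)
    have hLtop := (hirr _ hL).resolve_left fun h =>
      hu.2 ((Submodule.mem_bot ℂ).1 (h ▸ Submodule.mem_span_singleton_self u))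
    rw [← finrank_top ℂ V, ← hLtop, finrank_span_singleton hu.2]

end Representation

section TwoDim

open scoped Matrix

def diagHom (π : A →* ℂ) : A →* Matrix (Fin 2) (Fin 2) ℂ where
  toFun a := !![π a, 0; 0, π a⁻¹]
  map_one' := by simp [Matrix.one_fin_two]
  map_mul' a b := by simp [mul_comm]

noncomputable def inducedRep (π : A →* ℂ) : Dic A y hy →* Matrix (Fin 2) (Fin 2) ℂ where
  toFun := Rpi π
  __ := lift (diagHom π) !![0, π y; 1, 0]
    (by
      change _ = !![π y, 0; 0, π y⁻¹]
      simp [inv_eq_of_mul_eq_one_right hy])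
    (fun a => by simp [diagHom, mul_comm])

@[simp] lemma inducedRep_ofAHom (π : A →* ℂ) (a : A) :
    inducedRep (hy := hy) π (ofAHom a) = !![π a, 0; 0, π a⁻¹] := by
  change Rpi π (ofAHom a) = _
  simp [Rpi]

@[simp] lemma inducedRep_x (π : A →* ℂ) :
    inducedRep (hy := hy) π (x A y hy) = !![0, π y; 1, 0] := by
  change Rpi π (x A y hy) = _
  simp [Rpi, x]

theorem isIrredMatRep_inducedRep {π : A →* ℂ} (hπ : π.comp invMonoidHom ≠ π) :
    IsIrredMatRep (inducedRep (hy := hy) π) := by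
  obtain ⟨a, ha⟩ : ∃ a, π a⁻¹ ≠ π a := by simpa [DFunLike.ext_iff] using hπ
  intro W hW
  refine or_iff_not_imp_left.2 fun hW0 => ?_
  obtain ⟨v, hvW, hv0⟩ := W.exists_mem_ne_zero_of_ne_bot hW0
  have hD := hW (ofAHom a) v hvW
  have hX := hW (x A y hy)
  simp only [inducedRep_ofAHom, inducedRep_x] at hD hX
  -- `ρ(a)` has the distinct eigenvalues `π a`, `π a⁻¹` on `e₀`, `e₁`, so `W` contains one of
  -- them, and `ρ(x)` swaps their lines.
  have he₀ : v 0 ≠ 0 → ![1, 0] ∈ W := fun h => by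
    refine (W.smul_mem_iff (mul_ne_zero (sub_ne_zero.2 ha.symm) h)).1 ?_
    convert W.sub_mem hD (W.smul_mem (π a⁻¹) hvW) using 1
    ext i; fin_cases i <;> simp [Matrix.vecHead, Matrix.vecTail, sub_mul]
  have he₁ : v 1 ≠ 0 → ![0, 1] ∈ W := fun h => by
    refine (W.smul_mem_iff (mul_ne_zero (sub_ne_zero.2 ha) h)).1 ?_
    convert W.sub_mem hD (W.smul_mem (π a) hvW) using 1
    ext i; fin_cases i <;> simp [Matrix.vecHead, Matrix.vecTail, sub_mul]
  have h₀₁ : ![1, 0] ∈ W → ![0, 1] ∈ W := fun h => by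
    convert hX _ h using 1
    ext i; fin_cases i <;> simp
  have h₁₀ : ![0, 1] ∈ W → ![1, 0] ∈ W := fun h => by
    refine (W.smul_mem_iff (IsUnit.map π (Group.isUnit y)).ne_zero).1 ?_
    convert hX _ h using 1
    ext i; fin_cases i <;> simp
  have hbasis : ![1, 0] ∈ W ∧ ![0, 1] ∈ W := by
    by_cases h : v 0 = 0
    · have h1 : v 1 ≠ 0 := fun h1 => hv0 (by ext i; fin_cases i <;> simp [h, h1])
      exact ⟨h₁₀ (he₁ h1), he₁ h1⟩
    · exact ⟨he₀ h, h₀₁ (he₀ h)⟩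
  refine eq_top_iff.2 fun u _ => ?_
  have : u = u 0 • ![1, 0] + u 1 • ![0, 1] := by ext i; fin_cases i <;> simp
  rw [this]
  exact W.add_mem (W.smul_mem _ hbasis.1) (W.smul_mem _ hbasis.2)

theorem matRepEquiv_of_generators {ρ₁ ρ₂ : Dic A y hy →* Matrix (Fin 2) (Fin 2) ℂ}
    {T : Matrix (Fin 2) (Fin 2) ℂ} (hT : IsUnit T)
    (hA : ∀ a, T * ρ₁ (ofAHom a) = ρ₂ (ofAHom a) * T)
    (hx : T * ρ₁ (x A y hy) = ρ₂ (x A y hy) * T) : MatRepEquiv ρ₁ ρ₂ :=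
  ⟨T, hT, fun g => g.induction_on (P := fun g => T * ρ₁ g = ρ₂ g * T) hA hx fun g h hg hh => by
    rw [map_mul, map_mul, ← mul_assoc, hg, mul_assoc, hh, mul_assoc]⟩

theorem matRepEquiv_inducedRep_comp_invMonoidHom (π : A →* ℂ) :
    MatRepEquiv (inducedRep (hy := hy) π) (inducedRep (π.comp invMonoidHom)) := by
  refine matRepEquiv_of_generators (T := !![0, π y; 1, 0]) ?_ (fun a => ?_) ?_
  · simpa [Matrix.isUnit_iff_isUnit_det] using (IsUnit.map π (Group.isUnit y)).ne_zero
  · simp [mul_comm]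
  · simp [inv_eq_of_mul_eq_one_right hy]

theorem eq_or_eq_comp_invMonoidHom_of_matRepEquiv {π σ : A →* ℂ}
    (h : MatRepEquiv (inducedRep (hy := hy) π) (inducedRep σ)) :
    σ = π ∨ σ = π.comp invMonoidHom := by
  refine MonoidHom.eq_or_eq_of_forall_eq_or_eq fun a => ?_
  have htr := h.trace_eq (ofAHom a)
  simp only [inducedRep_ofAHom, Matrix.trace_fin_two_of] at htr
  have hπ : π a * π a⁻¹ = 1 := by rw [← map_mul, mul_inv_cancel, map_one]
  have hσ : σ a * σ a⁻¹ = 1 := by rw [← map_mul, mul_inv_cancel, map_one]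
  have : (σ a - π a) * (σ a - π a⁻¹) = 0 := by linear_combination hπ - hσ - σ a * htr
  simpa [sub_eq_zero] using this

theorem matRepEquiv_inducedRep_iff {π σ : A →* ℂ} :
    MatRepEquiv (inducedRep (hy := hy) π) (inducedRep σ) ↔ σ = π ∨ σ = π.comp invMonoidHom :=
  ⟨eq_or_eq_comp_invMonoidHom_of_matRepEquiv, by
    rintro (rfl | rfl)
    exacts [.refl _, matRepEquiv_inducedRep_comp_invMonoidHom _]⟩

theorem exists_matRepEquiv_inducedRep {ρ : Dic A y hy →* Matrix (Fin 2) (Fin 2) ℂ}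
    (hρ : IsIrredMatRep ρ) :
    ∃ π : A →* ℂ, π.comp invMonoidHom ≠ π ∧ MatRepEquiv (inducedRep π) ρ := by
  let ρ' : Representation ℂ (Dic A y hy) (Fin 2 → ℂ) := Matrix.toLinAlgEquiv'.toMonoidHom.comp ρ
  have hρ' : ∀ W : Submodule ℂ (Fin 2 → ℂ), (∀ g, ∀ v ∈ W, ρ' g v ∈ W) → W = ⊥ ∨ W = ⊤ := hρ
  obtain ⟨π, v, -, hv, hspan⟩ := exists_eigenvector_span_eq_top ρ' hρ'
  have hw := ofAHom_apply_x_apply ρ' hv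
  have hxw := x_apply_x_apply ρ' hv
  set w := ρ' (x A y hy) v
  have hmem (u : Fin 2 → ℂ) : ∃ s t : ℂ, s • v + t • w = u :=
    Submodule.mem_span_pair.1 (hspan ▸ Submodule.mem_top)
  refine ⟨π, fun hπ => ?_, ?_⟩
  · have := finrank_le_one_of_forall_eq_smul ρ' hρ' π fun a u => by
      obtain ⟨s, t, rfl⟩ := hmem u
      have hπa : π a⁻¹ = π a := DFunLike.congr_fun hπ a
      rw [map_add, map_smul, map_smul, hv, hw, hπa, smul_comm s, smul_comm t, smul_add]
    simp at this
  · let P : Matrix (Fin 2) (Fin 2) ℂ := Matrix.of fun i j => ![v, w] j i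
    have hP (u : Fin 2 → ℂ) : P *ᵥ u = u 0 • v + u 1 • w := by
      ext i; simp [P, Matrix.mulVec, dotProduct, Fin.sum_univ_two, mul_comm]
    refine matRepEquiv_of_generators (T := P) ?_ (fun a => ?_) ?_
    · refine Matrix.mulVec_surjective_iff_isUnit.1 fun u => ?_
      obtain ⟨s, t, h⟩ := hmem u
      exact ⟨![s, t], by simpa [hP] using h⟩
    · refine Matrix.ext_iff_mulVec.2 fun u => ?_
      have hv' : ρ (ofAHom a) *ᵥ v = π a • v := hv a
      have hw' : ρ (ofAHom a) *ᵥ w = π a⁻¹ • w := hw a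
      rw [← Matrix.mulVec_mulVec, ← Matrix.mulVec_mulVec, hP, hP, inducedRep_ofAHom,
        Matrix.mulVec_add, Matrix.mulVec_smul, Matrix.mulVec_smul, hv', hw']
      simp [Matrix.vecHead, Matrix.vecTail, smul_smul, mul_comm]
    · refine Matrix.ext_iff_mulVec.2 fun u => ?_
      have hv' : ρ (x A y hy) *ᵥ v = w := rfl
      have hw' : ρ (x A y hy) *ᵥ w = π y • v := hxw
      rw [← Matrix.mulVec_mulVec, ← Matrix.mulVec_mulVec, hP, hP, inducedRep_x,
        Matrix.mulVec_add, Matrix.mulVec_smul, Matrix.mulVec_smul, hv', hw']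
      simp [Matrix.vecHead, Matrix.vecTail, smul_smul, mul_comm, add_comm]

theorem two_mul_card_irredTwoDimRep_quot [Finite A] :
    2 * Nat.card (Quot fun ρ₁ ρ₂ : IrredTwoDimRep (Dic A y hy) => MatRepEquiv ρ₁.1 ρ₂.1) =
      Nat.card {π : A →* ℂ // π.comp invMonoidHom ≠ π} := by
  have hinv (π : A →* ℂ) : (π.comp invMonoidHom).comp invMonoidHom = π := by ext; simp
  have hR : Equivalence fun ρ₁ ρ₂ : IrredTwoDimRep (Dic A y hy) => MatRepEquiv ρ₁.1 ρ₂.1 :=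
    MatRepEquiv.equivalence.comap _
  refine (Nat.card_eq_two_mul_of_fiber_eq_pair (F := fun π =>
      Quot.mk _ (⟨inducedRep π.1, isIrredMatRep_inducedRep π.2⟩ : IrredTwoDimRep (Dic A y hy)))
    ?_ (fun π => ⟨π.1.comp invMonoidHom, fun h => π.2 (by rw [← h, hinv])⟩)
    (fun π h => π.2 (congrArg Subtype.val h)) fun π σ => ?_).symm
  · rintro ⟨ρ⟩
    obtain ⟨π, hπ, h⟩ := exists_matRepEquiv_inducedRep ρ.2
    exact ⟨⟨π, hπ⟩, Quot.sound h⟩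
  · refine (hR.quot_mk_eq_iff _ _).trans ?_
    rw [Subtype.ext_iff, Subtype.ext_iff]
    exact matRepEquiv_inducedRep_iff

end TwoDim

end Dic

theorem dic_rep_classification_general {A : Type*} [CommGroup A] [Fintype A]
    (y : A) (hy : y * y = 1)
    (n : ℕ) (hn : Nat.card (A ⧸ (powMonoidHom 2 : A →* A).range) = 2 ^ n) :
    Nat.card (Dic A y hy →* ℂ) = 2 ^ (n + 1) ∧
    Nat.card (Quot fun ρ₁ ρ₂ : IrredTwoDimRep (Dic A y hy) => MatRepEquiv ρ₁.1 ρ₂.1) =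
      (Fintype.card A - 2 ^ n) / 2 ∧
    ∀ (V : Type) [AddCommGroup V] [Module ℂ V] [FiniteDimensional ℂ V]
      (ρ : Representation ℂ (Dic A y hy) V),
        (∀ W : Submodule ℂ V, (∀ g : Dic A y hy, ∀ v ∈ W, ρ g v ∈ W) → W = ⊥ ∨ W = ⊤) →
        Module.finrank ℂ V ≤ 2 := by
  have hself : Nat.card {π : A →* ℂ // π.comp invMonoidHom = π} = 2 ^ n := by
    rw [card_monoidHom_comp_invMonoidHom_eq_self, hn]
  have hsplit : Nat.card {π : A →* ℂ // π.comp invMonoidHom = π} +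
      Nat.card {π : A →* ℂ // π.comp invMonoidHom ≠ π} = Fintype.card A := by
    rw [← Nat.card_sum, Nat.card_congr (Equiv.sumCompl _), card_monoidHom_complex,
      Nat.card_eq_fintype_card]
  have htwo := Dic.two_mul_card_irredTwoDimRep_quot (y := y) (hy := hy)
  refine ⟨by rw [Dic.card_monoidHom_complex_eq_two_mul, hself, pow_succ, mul_comm], by omega,
    fun V _ _ _ ρ hirr => Dic.finrank_le_two ρ hirr⟩

/-- classification of the irreducible representations of `Dic(A,y)`: writing
`|A/A²| = 2ⁿ`, the group `Dic(A,y)` has exactly `2^(n+1)` one-dimensional complex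
representations, exactly `(|A| - 2ⁿ)/2` equivalence classes of irreducible two-dimensional
complex representations, and no irreducible complex representation of dimension at least 3. -/
theorem dic_rep_classification {A : Type*} [CommGroup A] [Fintype A]
    (hA : Even (Fintype.card A)) (hexp : 3 ≤ Monoid.exponent A)
    (y : A) (hy : y * y = 1) (hy1 : y ≠ 1)
    (n : ℕ) (hn : Nat.card (A ⧸ (powMonoidHom 2 : A →* A).range) = 2 ^ n) :
    Nat.card (Dic A y hy →* ℂ) = 2 ^ (n + 1) ∧
    Nat.card (Quot fun ρ₁ ρ₂ : IrredTwoDimRep (Dic A y hy) => MatRepEquiv ρ₁.1 ρ₂.1) =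
      (Fintype.card A - 2 ^ n) / 2 ∧
    ∀ (V : Type) [AddCommGroup V] [Module ℂ V] [FiniteDimensional ℂ V]
      (ρ : Representation ℂ (Dic A y hy) V),
        (∀ W : Submodule ℂ V, (∀ g : Dic A y hy, ∀ v ∈ W, ρ g v ∈ W) → W = ⊥ ∨ W = ⊤) →
        Module.finrank ℂ V ≤ 2 :=
  dic_rep_classification_general y hy n hn
end

section
/- Let S ⊆ Dic(A,y) with 1 ∉ S and S⁻¹ = S, written S = S₁ ∪ xS₂ with S₁, S₂ ⊆ A. Then for every positive integer n, S^(n) = ⋃_{k+ℓ=n, k,ℓ≥0} S₁^(k)·(xS₂)^(ℓ). -/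
open scoped Classical Pointwise

/-!
Since `x a · b = b⁻¹ · x a` in `Dic(A, y)` and `S₁` is closed under inversion, every letter of
`S₁` can be moved to the left past every letter of `xS₂` without changing the word length.
So for `T = S₁`, `U = xS₂` we have `U T ⊆ T U`, and in any monoid this commutation condition gives
`(T ∪ U)^n = ⋃_{k+l=n} T^k U^l`.
-/

section MulPow

variable {G : Type*} [Monoid G]

lemma mulPow_zero (S : Set G) : mulPow S 0 = 1 := by
  ext g
  simp [mulPow, eq_comm]

lemma mulPow_succ (S : Set G) (n : ℕ) : mulPow S (n + 1) = S * mulPow S n := by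
  ext g
  constructor
  · rintro ⟨_ | ⟨s, l⟩, hlen, hmem, rfl⟩
    · simp at hlen
    · exact ⟨s, hmem s List.mem_cons_self, l.prod,
        ⟨l, by simpa using hlen, fun u hu => hmem u (List.mem_cons_of_mem _ hu), rfl⟩, rfl⟩
  · rintro ⟨s, hs, _, ⟨l, rfl, hmem, rfl⟩, rfl⟩
    exact ⟨s :: l, rfl, by simpa [hs] using hmem, rfl⟩

theorem mulPow_eq_pow (S : Set G) (n : ℕ) : mulPow S n = S ^ n := by
  induction n with
  | zero => exact mulPow_zero S
  | succ n ih => rw [mulPow_succ, ih, pow_succ']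

end MulPow

namespace Set

variable {G : Type*} [Monoid G] {T U : Set G}

lemma mul_pow_subset_pow_mul (h : U * T ⊆ T * U) (k : ℕ) : U * T ^ k ⊆ T ^ k * U := by
  induction k with
  | zero => simp
  | succ k ih =>
    calc U * T ^ (k + 1) = U * T ^ k * T := by rw [pow_succ, mul_assoc]
      _ ⊆ T ^ k * U * T := mul_subset_mul_right ih
      _ ⊆ T ^ k * (T * U) := by rw [mul_assoc]; exact mul_subset_mul_left h
      _ = T ^ (k + 1) * U := by rw [pow_succ, mul_assoc]

theorem union_pow_eq_iUnion_pow_mul_pow (h : U * T ⊆ T * U) (n : ℕ) :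
    (T ∪ U) ^ n = ⋃ (k : ℕ) (l : ℕ) (_ : k + l = n), T ^ k * U ^ l := by
  refine Subset.antisymm ?_ (iUnion₂_subset fun k l => iUnion_subset fun hkl => ?_)
  · induction n with
    | zero => exact subset_iUnion₂_of_subset 0 0 (subset_iUnion_of_subset rfl (by simp))
    | succ n ih =>
      rw [pow_succ']
      rintro _ ⟨s, hs, _, hp, rfl⟩
      obtain ⟨k, l, hkl, a, ha, b, hb, rfl⟩ : ∃ k l, k + l = n ∧ _ := by
        simpa using ih hp
      beta_reduce
      simp only [mem_iUnion]
      rcases hs with hs | hs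
      · refine ⟨k + 1, l, by omega, ?_⟩
        rw [← mul_assoc, pow_succ']
        exact mul_mem_mul (mul_mem_mul hs ha) hb
      · obtain ⟨a', ha', u, hu, hsa⟩ := mul_pow_subset_pow_mul h k (mul_mem_mul hs ha)
        beta_reduce at hsa
        refine ⟨k, l + 1, by omega, ?_⟩
        rw [← mul_assoc, ← hsa, mul_assoc, pow_succ']
        exact mul_mem_mul ha' (mul_mem_mul hu hb)
  · rw [← hkl, pow_add]
    exact mul_subset_mul (pow_subset_pow_left subset_union_left)
      (pow_subset_pow_left subset_union_right)

end Set

namespace Dic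

variable {A : Type*} [CommGroup A] {y : A} {hy : y * y = 1}

lemma inv_ofA (a : A) : (ofA a : Dic A y hy)⁻¹ = ofA a⁻¹ := by
  ext <;> simp [ofA]

lemma mul_ofA_eq_ofA_inv_mul {g : Dic A y hy} (hg : g.t = true) (b : A) :
    g * ofA b = ofA b⁻¹ * g := by
  ext <;> simp [ofA, hg, mul_comm]

lemma mul_image_ofA_subset {U : Set (Dic A y hy)} (hU : ∀ g ∈ U, g.t = true) {B : Set A}
    (hB : B⁻¹ ⊆ B) : U * ofA '' B ⊆ ofA '' B * U := by
  rintro _ ⟨g, hg, _, ⟨b, hb, rfl⟩, rfl⟩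
  exact ⟨ofA b⁻¹, ⟨b⁻¹, hB (by simpa using hb), rfl⟩, g, hg,
    (mul_ofA_eq_ofA_inv_mul (hU g hg) b).symm⟩

end Dic

theorem mulPow_dic_decomposition_general {A : Type*} [CommGroup A]
    (y : A) (hy : y * y = 1)
    (S : Set (Dic A y hy)) (S₁ S₂ : Set A)
    (hS : S = Dic.ofA '' S₁ ∪ (fun a => Dic.x A y hy * Dic.ofA a) '' S₂)
    (hSinv : S⁻¹ = S) :
    ∀ n : ℕ, 0 < n →
      mulPow S n =
        ⋃ (k : ℕ) (l : ℕ) (_ : k + l = n),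
          mulPow (Dic.ofA '' S₁) k * mulPow ((fun a => Dic.x A y hy * Dic.ofA a) '' S₂) l := by
  intro n _
  have hx : ∀ g ∈ (fun a => Dic.x A y hy * Dic.ofA a) '' S₂, g.t = true := by
    rintro _ ⟨a, -, rfl⟩
    rfl
  have hS₁ : S₁⁻¹ ⊆ S₁ := by
    intro b hb
    have hbS : (Dic.ofA b⁻¹ : Dic A y hy)⁻¹ ∈ S := by
      rw [← Set.mem_inv, hSinv, hS]
      exact Or.inl ⟨b⁻¹, hb, rfl⟩
    rw [Dic.inv_ofA, inv_inv, hS] at hbS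
    rcases hbS with ⟨c, hc, hcb⟩ | hbx
    · rwa [← show c = b from congrArg Dic.a hcb]
    · exact absurd (hx _ hbx) Bool.false_ne_true
  simp only [mulPow_eq_pow]
  rw [hS, Set.union_pow_eq_iUnion_pow_mul_pow (Dic.mul_image_ofA_subset hx hS₁)]

/-- Lemma 4.2: for `S = S₁ ∪ xS₂ ⊆ Dic(A,y)` with `1 ∉ S` and `S⁻¹ = S`,
for every positive integer `n` one has `S^(n) = ⋃_{k+ℓ=n} S₁^(k)·(xS₂)^(ℓ)`. -/
theorem mulPow_dic_decomposition {A : Type*} [CommGroup A] [Fintype A]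
    (hA : Even (Fintype.card A)) (hexp : 3 ≤ Monoid.exponent A)
    (y : A) (hy : y * y = 1) (hy1 : y ≠ 1)
    (S : Set (Dic A y hy)) (S₁ S₂ : Set A)
    (hS : S = Dic.ofA '' S₁ ∪ (fun a => Dic.x A y hy * Dic.ofA a) '' S₂)
    (h1S : (1 : Dic A y hy) ∉ S) (hSinv : S⁻¹ = S) :
    ∀ n : ℕ, 0 < n →
      mulPow S n =
        ⋃ (k : ℕ) (l : ℕ) (_ : k + l = n),
          mulPow (Dic.ofA '' S₁) k * mulPow ((fun a => Dic.x A y hy * Dic.ofA a) '' S₂) l :=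
  mulPow_dic_decomposition_general y hy S S₁ S₂ hS hSinv
end

section
/- Let S ⊆ Dic(A,y) with 1 ∉ S, S⁻¹ = S and ⟨S⟩ = Dic(A,y). Then ℓ_S(x³a) = ℓ_S(xa) for every a ∈ A; equivalently, ℓ_S(x(ya)) = ℓ_S(xa) for every a ∈ A. -/
open scoped Classical Pointwise

lemma inv_mem_mulPow_inv {G : Type*} [Group G] {S : Set G} {n : ℕ} {g : G}
    (hg : g ∈ mulPow S n) : g⁻¹ ∈ mulPow S⁻¹ n := by
  obtain ⟨l, rfl, hl, rfl⟩ := hg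
  refine ⟨(l.map (·⁻¹)).reverse, by simp, ?_, (List.prod_inv_reverse l).symm⟩
  simp only [List.mem_reverse, List.mem_map]
  rintro _ ⟨u, hu, rfl⟩
  exact Set.inv_mem_inv.2 (hl u hu)

lemma wordLen_inv {G : Type*} [Group G] {S : Set G} (hS : S⁻¹ = S) (g : G) :
    wordLen S g⁻¹ = wordLen S g := by
  have hmem : ∀ n, g⁻¹ ∈ mulPow S n ↔ g ∈ mulPow S n := fun n =>
    ⟨fun h => by simpa [hS] using inv_mem_mulPow_inv h,
      fun h => hS ▸ inv_mem_mulPow_inv h⟩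
  simp only [wordLen, inv_eq_one, hmem]

namespace Dic

variable {A : Type*} [CommGroup A] {y : A} {hy : y * y = 1}

lemma ofA_mul (a b : A) : (ofA (a * b) : Dic A y hy) = ofA a * ofA b := by
  ext <;> simp [ofA]

lemma x_sq : x A y hy ^ 2 = ofA y := by
  ext <;> simp [pow_two, x, ofA]

lemma x_mul_ofA_inv (a : A) : (x A y hy * ofA a)⁻¹ = x A y hy * ofA (y * a) := by
  ext <;> simp [x, ofA, mul_comm]

lemma x_pow_three_mul_ofA (a : A) : x A y hy ^ 3 * ofA a = x A y hy * ofA (y * a) := by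
  rw [pow_succ', x_sq, mul_assoc, ofA_mul]

end Dic

theorem dic_wordLen_x_cubed_general {A : Type*} [CommGroup A]
    (y : A) (hy : y * y = 1)
    (S : Set (Dic A y hy)) (hSinv : S⁻¹ = S) :
    (∀ a : A, wordLen S (Dic.x A y hy ^ 3 * Dic.ofA a) = wordLen S (Dic.x A y hy * Dic.ofA a)) ∧
    (∀ a : A, wordLen S (Dic.x A y hy * Dic.ofA (y * a))
      = wordLen S (Dic.x A y hy * Dic.ofA a)) := by
  have hinv (a : A) : wordLen S (Dic.x A y hy * Dic.ofA (y * a))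
      = wordLen S (Dic.x A y hy * Dic.ofA a) := by
    rw [← Dic.x_mul_ofA_inv, wordLen_inv hSinv]
  exact ⟨fun a => Dic.x_pow_three_mul_ofA a ▸ hinv a, hinv⟩

/-- for `S` generating `Dic(A,y)` with `1 ∉ S`, `S⁻¹ = S`, one has
`ℓ_S(x³a) = ℓ_S(xa)` for all `a ∈ A`; equivalently, `ℓ_S(x(ya)) = ℓ_S(xa)` for all `a ∈ A`. -/
theorem dic_wordLen_x_cubed {A : Type*} [CommGroup A] [Fintype A]
    (hA : Even (Fintype.card A)) (hexp : 3 ≤ Monoid.exponent A)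
    (y : A) (hy : y * y = 1) (hy1 : y ≠ 1)
    (S : Set (Dic A y hy)) (h1S : (1 : Dic A y hy) ∉ S) (hSinv : S⁻¹ = S)
    (hgen : Subgroup.closure S = ⊤) :
    (∀ a : A, wordLen S (Dic.x A y hy ^ 3 * Dic.ofA a) = wordLen S (Dic.x A y hy * Dic.ofA a)) ∧
    (∀ a : A, wordLen S (Dic.x A y hy * Dic.ofA (y * a))
      = wordLen S (Dic.x A y hy * Dic.ofA a)) :=
  dic_wordLen_x_cubed_general y hy S hSinv
end

section
/- Let S ⊆ Dic(A,y) with 1 ∉ S, S⁻¹ = S and ⟨S⟩ = Dic(A,y), written S = S₁ ∪ xS₂ with S₁, S₂ ⊆ A, and assume S₂⁻¹ = S₂. Then ℓ_S(xa) = ℓ_S(xa⁻¹) for every a ∈ A. -/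
open scoped Classical Pointwise

/-! Conjugation by `x` inverts `A` and fixes `x`, so it sends `x a⁻¹` to `x a`. Since `S⁻¹ = S`
forces `S₁⁻¹ = S₁`, and `S₂⁻¹ = S₂`, this automorphism maps `S` onto itself, and word length is
invariant under automorphisms preserving the generating set. -/

lemma mulPow_mapsTo {M N F : Type*} [Monoid M] [Monoid N] [FunLike F M N] [MonoidHomClass F M N]
    (φ : F) {S : Set M} {T : Set N} (h : Set.MapsTo φ S T) (n : ℕ) :
    Set.MapsTo φ (mulPow S n) (mulPow T n) := by
  rintro g ⟨l, rfl, hl, rfl⟩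
  exact ⟨l.map φ, l.length_map φ, by simpa using fun u hu => h (hl u hu), (map_list_prod φ l).symm⟩

lemma map_mem_mulPow_iff {G H : Type*} [Monoid G] [Monoid H] (φ : G ≃* H) {S : Set G}
    {T : Set H} (h : φ ⁻¹' T = S) {g : G} {n : ℕ} : φ g ∈ mulPow T n ↔ g ∈ mulPow S n := by
  refine ⟨fun hg => ?_, fun hg => mulPow_mapsTo φ (h ▸ Set.mapsTo_preimage φ T) n hg⟩
  have hsymm : Set.MapsTo φ.symm T S := fun t ht => by rw [← h]; simpa using ht
  simpa using mulPow_mapsTo φ.symm hsymm n hg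

lemma wordLen_map {G H : Type*} [Group G] [Group H] (φ : G ≃* H) {S : Set G} {T : Set H}
    (h : φ ⁻¹' T = S) (g : G) : wordLen T (φ g) = wordLen S g := by
  simp only [wordLen, MulEquiv.map_eq_one_iff, map_mem_mulPow_iff φ h]

namespace Dic

variable {A : Type*} [CommGroup A] {y : A} {hy : y * y = 1}

lemma x_mul_ofA (b : A) : x A y hy * ofA b = ⟨true, b⟩ := by
  ext <;> simp [x, ofA]

lemma ofA_inv (b : A) : (ofA b : Dic A y hy)⁻¹ = ofA b⁻¹ := rfl

lemma conj_x_ofA (b : A) : MulAut.conj (x A y hy) (ofA b) = ofA b⁻¹ := by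
  ext <;> simp [x, ofA, mul_assoc, hy]

lemma conj_x_x_mul_ofA (b : A) :
    MulAut.conj (x A y hy) (x A y hy * ofA b) = x A y hy * ofA b⁻¹ := by
  rw [map_mul, conj_x_ofA, MulAut.conj_apply, mul_inv_cancel_right]

variable {S₁ S₂ : Set A}

lemma ofA_mem_iff {b : A} :
    ofA b ∈ ofA '' S₁ ∪ (x A y hy * ofA ·) '' S₂ ↔ b ∈ S₁ := by
  simp [Dic.x, ofA, Dic.ext_iff]

lemma x_mul_ofA_mem_iff {b : A} :
    x A y hy * ofA b ∈ ofA '' S₁ ∪ (x A y hy * ofA ·) '' S₂ ↔ b ∈ S₂ := by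
  simp [Dic.x, ofA, Dic.ext_iff]

lemma inv_eq_of_image_union_inv_eq
    (h : (ofA '' S₁ ∪ (x A y hy * ofA ·) '' S₂)⁻¹ = ofA '' S₁ ∪ (x A y hy * ofA ·) '' S₂) :
    S₁⁻¹ = S₁ := by
  ext b
  rw [Set.mem_inv, ← ofA_mem_iff (hy := hy) (S₂ := S₂), ← ofA_inv, ← Set.mem_inv, h, ofA_mem_iff]

lemma conj_x_preimage_image_union (h₁ : S₁⁻¹ = S₁) (h₂ : S₂⁻¹ = S₂) :
    MulAut.conj (x A y hy) ⁻¹' (ofA '' S₁ ∪ (x A y hy * ofA ·) '' S₂) =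
      ofA '' S₁ ∪ (x A y hy * ofA ·) '' S₂ := by
  ext ⟨t, b⟩
  cases t
  · rw [show (⟨false, b⟩ : Dic A y hy) = ofA b from rfl, Set.mem_preimage, conj_x_ofA,
      ofA_mem_iff, ofA_mem_iff, ← Set.mem_inv, h₁]
  · rw [← x_mul_ofA, Set.mem_preimage, conj_x_x_mul_ofA, x_mul_ofA_mem_iff, x_mul_ofA_mem_iff,
      ← Set.mem_inv, h₂]

end Dic

theorem dic_wordLen_x_inv_general {A : Type*} [CommGroup A]
    (y : A) (hy : y * y = 1)
    (S : Set (Dic A y hy)) (S₁ S₂ : Set A)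
    (hS : S = Dic.ofA '' S₁ ∪ (fun a => Dic.x A y hy * Dic.ofA a) '' S₂)
    (hSinv : S⁻¹ = S) (hS₂inv : S₂⁻¹ = S₂) :
    ∀ a : A, wordLen S (Dic.x A y hy * Dic.ofA a) = wordLen S (Dic.x A y hy * Dic.ofA a⁻¹) := by
  intro a
  subst hS
  have hS₁inv : S₁⁻¹ = S₁ := Dic.inv_eq_of_image_union_inv_eq hSinv
  rw [← wordLen_map _ (Dic.conj_x_preimage_image_union (hy := hy) hS₁inv hS₂inv),
    Dic.conj_x_x_mul_ofA]

/-- for `S = S₁ ∪ xS₂` generating `Dic(A,y)` with `1 ∉ S`, `S⁻¹ = S` and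
`S₂⁻¹ = S₂`, one has `ℓ_S(xa) = ℓ_S(xa⁻¹)` for every `a ∈ A`. -/
theorem dic_wordLen_x_inv {A : Type*} [CommGroup A] [Fintype A]
    (hA : Even (Fintype.card A)) (hexp : 3 ≤ Monoid.exponent A)
    (y : A) (hy : y * y = 1) (hy1 : y ≠ 1)
    (S : Set (Dic A y hy)) (S₁ S₂ : Set A)
    (hS : S = Dic.ofA '' S₁ ∪ (fun a => Dic.x A y hy * Dic.ofA a) '' S₂)
    (h1S : (1 : Dic A y hy) ∉ S) (hSinv : S⁻¹ = S)
    (hgen : Subgroup.closure S = ⊤) (hS₂inv : S₂⁻¹ = S₂) :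
    ∀ a : A, wordLen S (Dic.x A y hy * Dic.ofA a) = wordLen S (Dic.x A y hy * Dic.ofA a⁻¹) :=
  dic_wordLen_x_inv_general y hy S S₁ S₂ hS hSinv hS₂inv
end
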